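/- arXiv:math/0512018 — 4 statements merged into one kernel-verified Lean document; each statement's English description precedes it below -/
import Mathlib

section
/- Let H : ℝⁿ × ℝⁿ → ℝ be a Tonelli Hamiltonian, c ∈ ℝ, and u : ℝⁿ → ℝ a Lipschitz ℤⁿ-periodic function. Then u is a subsolution of H(x,du_x) = c if and only if the inequality u(y) − u(x) ≤ A_t(x,y) holds for every t > 0 and all x, y ∈ ℝⁿ. -/
open MeasureTheory Filter Set
open scoped RealInnerProductSpace

noncomputable section

/-- A function `ℝⁿ → ℝ` is ℤⁿ-periodic if it is invariant under integer translations. -/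
def ZPeriodic {n : ℕ} (f : EuclideanSpace ℝ (Fin n) → ℝ) : Prop :=
  ∀ (x : EuclideanSpace ℝ (Fin n)) (k : Fin n → ℤ), f (x + (EuclideanSpace.equiv (Fin n) ℝ).symm (fun i => (k i : ℝ))) = f x

/-- A Tonelli Hamiltonian: `C²`, ℤⁿ-periodic in the position variable, with positive
definite second derivative in the momentum variable, and superlinear in the momentum. -/
structure IsTonelli {n : ℕ}
    (H : EuclideanSpace ℝ (Fin n) × EuclideanSpace ℝ (Fin n) → ℝ) : Prop where
  smooth : ContDiff ℝ 2 H
  periodic : ∀ (x p : EuclideanSpace ℝ (Fin n)) (k : Fin n → ℤ),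
    H (x + (EuclideanSpace.equiv (Fin n) ℝ).symm (fun i => (k i : ℝ)), p) = H (x, p)
  posdef : ∀ x p v, v ≠ 0 → 0 < iteratedFDeriv ℝ 2 (fun q => H (x, q)) p (fun _ => v)
  superlinear : ∀ x,
    Tendsto (fun p : EuclideanSpace ℝ (Fin n) => H (x, p) / ‖p‖) (comap (‖·‖) atTop) atTop

/-- A (Lipschitz, almost-everywhere) subsolution of `H(x, du_x) = c`. -/
def IsSubsolution {n : ℕ} (H : EuclideanSpace ℝ (Fin n) × EuclideanSpace ℝ (Fin n) → ℝ)
    (c : ℝ) (u : EuclideanSpace ℝ (Fin n) → ℝ) : Prop :=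
  (∃ K, LipschitzWith K u) ∧ ZPeriodic u ∧
    ∀ᵐ x : EuclideanSpace ℝ (Fin n), DifferentiableAt ℝ u x ∧ H (x, gradient u x) ≤ c

/-- A function is `C^{1,1}` if it is differentiable with Lipschitz gradient. -/
def IsC11 {n : ℕ} (u : EuclideanSpace ℝ (Fin n) → ℝ) : Prop :=
  Differentiable ℝ u ∧ ∃ K, LipschitzWith K (fun x => gradient u x)

/-- The Lagrangian associated with `H` by Legendre duality. -/
def Lag {n : ℕ} (H : EuclideanSpace ℝ (Fin n) × EuclideanSpace ℝ (Fin n) → ℝ)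
    (x v : EuclideanSpace ℝ (Fin n)) : ℝ :=
  ⨆ p : EuclideanSpace ℝ (Fin n), ((inner ℝ p v : ℝ) - H (x, p))

/-- The action `A_t(x,y)` at level `c`: the minimal Lagrangian action (plus `c·t`) over
`C²` curves joining `x` to `y` in time `t`. -/
def action {n : ℕ} (H : EuclideanSpace ℝ (Fin n) × EuclideanSpace ℝ (Fin n) → ℝ)
    (c t : ℝ) (x y : EuclideanSpace ℝ (Fin n)) : ℝ :=
  sInf { a | ∃ γ : ℝ → EuclideanSpace ℝ (Fin n), ContDiff ℝ 2 γ ∧ γ 0 = x ∧ γ t = y ∧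
    a = ∫ s in (0:ℝ)..t, (c + Lag H (γ s) (deriv γ s)) }

/-- The Lax–Oleinik semigroup `T_t`. -/
def Tmin {n : ℕ} (H : EuclideanSpace ℝ (Fin n) × EuclideanSpace ℝ (Fin n) → ℝ)
    (c t : ℝ) (u : EuclideanSpace ℝ (Fin n) → ℝ) : EuclideanSpace ℝ (Fin n) → ℝ :=
  fun x => if t = 0 then u x else sInf { a | ∃ y, a = u y + action H c t y x }

/-- The backward Lax–Oleinik semigroup `T̆_t`. -/
def Tmax {n : ℕ} (H : EuclideanSpace ℝ (Fin n) × EuclideanSpace ℝ (Fin n) → ℝ)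
    (c t : ℝ) (u : EuclideanSpace ℝ (Fin n) → ℝ) : EuclideanSpace ℝ (Fin n) → ℝ :=
  fun x => if t = 0 then u x else sSup { a | ∃ y, a = u y - action H c t x y }

/-- The Mañé critical value. -/
def mane {n : ℕ} (H : EuclideanSpace ℝ (Fin n) × EuclideanSpace ℝ (Fin n) → ℝ) : ℝ :=
  sInf { c | ∃ u, IsSubsolution H c u }

/-- A `C¹` critical subsolution. -/
def IsC1CriticalSub {n : ℕ} (H : EuclideanSpace ℝ (Fin n) × EuclideanSpace ℝ (Fin n) → ℝ)
    (u : EuclideanSpace ℝ (Fin n) → ℝ) : Prop :=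
  ContDiff ℝ 1 u ∧ ZPeriodic u ∧ ∀ x, H (x, gradient u x) ≤ mane H

/-- The projected Aubry set. -/
def Aubry {n : ℕ} (H : EuclideanSpace ℝ (Fin n) × EuclideanSpace ℝ (Fin n) → ℝ) :
    Set (EuclideanSpace ℝ (Fin n)) :=
  { x | ∀ u, IsC1CriticalSub H u → H (x, gradient u x) = mane H }


/-- `u` is `K`-semi-concave: `x ↦ u(x) - K‖x‖²` is concave. -/
def SemiconcaveWith {n : ℕ} (K : ℝ) (u : EuclideanSpace ℝ (Fin n) → ℝ) : Prop :=
  ConcaveOn ℝ Set.univ (fun x => u x - K * ‖x‖ ^ 2)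

/-- `u` is semi-concave if it is `K`-semi-concave for some `K > 0`. -/
def Semiconcave {n : ℕ} (u : EuclideanSpace ℝ (Fin n) → ℝ) : Prop :=
  ∃ K > 0, SemiconcaveWith K u

/-- `u` is semi-convex if `-u` is semi-concave. -/
def Semiconvex {n : ℕ} (u : EuclideanSpace ℝ (Fin n) → ℝ) : Prop :=
  Semiconcave (fun x => -u x)

/-- The subsolution `u` of `H(x,du_x) = c` is strict on the open set `U`: there is a
continuous nonnegative ℤⁿ-periodic function `V`, positive on `U`, such that `u` is a
subsolution of `H(x,du_x) + V(x) = c`. -/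
def StrictOn {n : ℕ} (H : EuclideanSpace ℝ (Fin n) × EuclideanSpace ℝ (Fin n) → ℝ)
    (c : ℝ) (u : EuclideanSpace ℝ (Fin n) → ℝ) (U : Set (EuclideanSpace ℝ (Fin n))) : Prop :=
  ∃ V : EuclideanSpace ℝ (Fin n) → ℝ, Continuous V ∧ ZPeriodic V ∧ (∀ x, 0 ≤ V x) ∧
    (∀ x ∈ U, 0 < V x) ∧
    ∀ᵐ x : EuclideanSpace ℝ (Fin n), DifferentiableAt ℝ u x ∧ H (x, gradient u x) + V x ≤ c

section AuxProofs

variable {n : ℕ} {H : EuclideanSpace ℝ (Fin n) × EuclideanSpace ℝ (Fin n) → ℝ}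

local notation "E" => EuclideanSpace ℝ (Fin n)

lemma exists_fund (hH : IsTonelli H) (x : E) :
    ∃ y : E, ‖y‖ ≤ Real.sqrt n ∧ ∀ p, H (x, p) = H (y, p) := by
  classical
  refine ⟨x - (EuclideanSpace.equiv (Fin n) ℝ).symm (fun i => ((⌊x i⌋ : ℤ) : ℝ)), ?_, fun p => ?_⟩
  · set y : E := x - (EuclideanSpace.equiv (Fin n) ℝ).symm (fun i => ((⌊x i⌋ : ℤ) : ℝ)) with hy
    rw [EuclideanSpace.norm_eq]
    have h1 : ∀ i, ‖y i‖ ^ 2 ≤ 1 := by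
      intro i
      have hyi : y i = x i - (⌊x i⌋ : ℝ) := rfl
      have h0 := Int.floor_le (x i)
      have h2 := (Int.lt_floor_add_one (x i)).le
      rw [hyi, Real.norm_eq_abs, abs_of_nonneg (by linarith)]
      nlinarith
    calc Real.sqrt (∑ i, ‖y i‖ ^ 2) ≤ Real.sqrt (∑ _i : Fin n, 1) :=
          Real.sqrt_le_sqrt (Finset.sum_le_sum fun i _ => h1 i)
      _ = Real.sqrt n := by simp
  · have h := hH.periodic (x - (EuclideanSpace.equiv (Fin n) ℝ).symm (fun i => ((⌊x i⌋ : ℤ) : ℝ))) p (fun i => ⌊x i⌋)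
    rw [sub_add_cancel] at h
    exact h

lemma slice_bound (hH : IsTonelli H) (r : ℝ) : ∃ C, ∀ (x p : E), ‖p‖ ≤ r → |H (x, p)| ≤ C := by
  obtain ⟨C, hC⟩ := ((isCompact_closedBall (0:E) (Real.sqrt n)).prod
    (isCompact_closedBall (0:E) r)).exists_bound_of_continuousOn
    hH.smooth.continuous.continuousOn
  refine ⟨C, fun x p hp => ?_⟩
  obtain ⟨y, hyn, hxy⟩ := exists_fund hH x
  rw [hxy]
  simpa [Real.norm_eq_abs] using hC (y, p) ⟨mem_closedBall_zero_iff.2 hyn, mem_closedBall_zero_iff.2 hp⟩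

lemma slice_contDiff (hH : IsTonelli H) (x : E) : ContDiff ℝ 2 (fun p : E => H (x, p)) :=
  hH.smooth.comp (contDiff_prodMk_right x)

lemma line_hasDerivAt {g : E → ℝ} (hg : ContDiff ℝ 2 g) (p w : E) (τ : ℝ) :
    HasDerivAt (fun t : ℝ => g (p + t • w)) (fderiv ℝ g (p + τ • w) w) τ := by
  have hc : HasDerivAt (fun t : ℝ => p + t • w) w τ := by
    simpa using ((hasDerivAt_id τ).smul_const w).const_add p
  exact ((hg.differentiable (by norm_num) (p + τ • w)).hasFDerivAt).comp_hasDerivAt τ hc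

lemma line_hasDerivAt2 {g : E → ℝ} (hg : ContDiff ℝ 2 g) (p w : E) (τ : ℝ) :
    HasDerivAt (fun t : ℝ => fderiv ℝ g (p + t • w) w)
      (iteratedFDeriv ℝ 2 g (p + τ • w) (fun _ => w)) τ := by
  have hc : HasDerivAt (fun t : ℝ => p + t • w) w τ := by
    simpa using ((hasDerivAt_id τ).smul_const w).const_add p
  have hdf : Differentiable ℝ (fderiv ℝ g) :=
    (hg.fderiv_right (m := 1) (le_refl 2)).differentiable one_ne_zero
  have h1 : HasDerivAt (fun t : ℝ => fderiv ℝ g (p + t • w))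
      (fderiv ℝ (fderiv ℝ g) (p + τ • w) w) τ :=
    ((hdf (p + τ • w)).hasFDerivAt).comp_hasDerivAt τ hc
  have h2 := h1.clm_apply (hasDerivAt_const τ w)
  simp only [map_zero, add_zero] at h2
  rw [iteratedFDeriv_two_apply]
  simpa using h2

lemma line_convex {g : E → ℝ} (hg : ContDiff ℝ 2 g)
    (hpos : ∀ p v, 0 ≤ iteratedFDeriv ℝ 2 g p (fun _ => v)) (p w : E) :
    ConvexOn ℝ univ (fun t : ℝ => g (p + t • w)) := by
  have hc : ∀ τ : ℝ, HasDerivAt (fun t : ℝ => g (p + t • w)) (fderiv ℝ g (p + τ • w) w) τ := by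
    intro τ
    have hcc : HasDerivAt (fun t : ℝ => p + t • w) w τ := by
      simpa using ((hasDerivAt_id τ).smul_const w).const_add p
    exact ((hg.differentiable (by norm_num) (p + τ • w)).hasFDerivAt).comp_hasDerivAt τ hcc
  have hd : deriv (fun t : ℝ => g (p + t • w)) = fun τ => fderiv ℝ g (p + τ • w) w :=
    funext fun τ => (hc τ).deriv
  have hc2 : ∀ τ : ℝ, HasDerivAt (fun t : ℝ => fderiv ℝ g (p + t • w) w)
      (iteratedFDeriv ℝ 2 g (p + τ • w) (fun _ => w)) τ := by
    intro τ
    have hcc : HasDerivAt (fun t : ℝ => p + t • w) w τ := by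
      simpa using ((hasDerivAt_id τ).smul_const w).const_add p
    have hdf : Differentiable ℝ (fderiv ℝ g) :=
      (hg.fderiv_right (m := 1) (le_refl 2)).differentiable one_ne_zero
    have h1 : HasDerivAt (fun t : ℝ => fderiv ℝ g (p + t • w))
        (fderiv ℝ (fderiv ℝ g) (p + τ • w) w) τ :=
      ((hdf (p + τ • w)).hasFDerivAt).comp_hasDerivAt τ hcc
    have h2 := h1.clm_apply (hasDerivAt_const τ w)
    simp only [map_zero, add_zero] at h2
    rw [iteratedFDeriv_two_apply]
    simpa using h2
  apply convexOn_of_deriv2_nonneg convex_univ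
  · exact fun τ _ => (hc τ).differentiableAt.continuousAt.continuousWithinAt
  · exact fun τ _ => (hc τ).differentiableAt.differentiableWithinAt
  · rw [hd]
    exact fun τ _ => (hc2 τ).differentiableAt.differentiableWithinAt
  · intro τ _
    have : deriv^[2] (fun t : ℝ => g (p + t • w)) τ
        = iteratedFDeriv ℝ 2 g (p + τ • w) (fun _ => w) := by
      show deriv (deriv fun t : ℝ => g (p + t • w)) τ = _
      rw [hd]
      exact (hc2 τ).deriv
    rw [this]
    exact hpos _ _

lemma line_tangent {g : E → ℝ} (hg : ContDiff ℝ 2 g)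
    (hpos : ∀ p v, 0 ≤ iteratedFDeriv ℝ 2 g p (fun _ => v)) (p q : E) :
    g p + fderiv ℝ g p (q - p) ≤ g q := by
  have hconv := line_convex hg hpos p (q - p)
  have hder : HasDerivWithinAt (fun t : ℝ => g (p + t • (q - p)))
      (fderiv ℝ g (p + (0:ℝ) • (q - p)) (q - p)) (Ioi 0) 0 := by
    have hcc : HasDerivAt (fun t : ℝ => p + t • (q - p)) (q - p) 0 := by
      simpa using ((hasDerivAt_id (0:ℝ)).smul_const (q - p)).const_add p
    exact (((hg.differentiable (by norm_num) _).hasFDerivAt).comp_hasDerivAt 0 hcc).hasDerivWithinAt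
  have hs := hconv.le_slope_of_hasDerivWithinAt_Ioi (mem_univ (0:ℝ)) (mem_univ (1:ℝ)) one_pos hder
  have h0 : p + (0:ℝ) • (q - p) = p := by simp
  have h1 : p + (1:ℝ) • (q - p) = q := by simp
  rw [slope_def_field] at hs
  rw [h0] at hs hder
  simp [h1] at hs
  rw [map_sub]
  linarith

lemma slice_segment {g : E → ℝ} (hg : ContDiff ℝ 2 g)
    (hpos : ∀ p v, 0 ≤ iteratedFDeriv ℝ 2 g p (fun _ => v))
    (p q : E) (a b : ℝ) (ha : 0 ≤ a) (hb : 0 ≤ b) (hab : a + b = 1) :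
    g (a • p + b • q) ≤ a * g p + b * g q := by
  have hconv := line_convex hg hpos p (q - p)
  have h := hconv.2 (mem_univ (0:ℝ)) (mem_univ (1:ℝ)) ha hb hab
  have he : p + (a * 0 + b * 1) • (q - p) = a • p + b • q := by
    have : a = 1 - b := by linarith
    subst this
    rw [smul_sub]
    module
  simp only [smul_eq_mul] at h
  have h1 : p + (1:ℝ) • (q - p) = q := by simp
  have h0 : p + (0:ℝ) • (q - p) = p := by simp
  rw [he, h0, h1] at h
  exact h

variable {H : EuclideanSpace ℝ (Fin n) × EuclideanSpace ℝ (Fin n) → ℝ}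

lemma posdef' (hH : IsTonelli H) (x : E) (p v : E) :
    0 ≤ iteratedFDeriv ℝ 2 (fun q => H (x, q)) p (fun _ => v) := by
  rcases eq_or_ne v 0 with rfl | hv
  · rw [(iteratedFDeriv ℝ 2 (fun q => H (x, q)) p).map_coord_zero (0 : Fin 2) rfl]
  · exact (hH.posdef x p v hv).le

lemma local_superlinear (hH : IsTonelli H) (A : ℝ) (hA : 0 ≤ A) (x₀ : E) :
    ∃ δ > 0, ∃ C, 0 ≤ C ∧ ∀ x ∈ Metric.ball x₀ δ, ∀ p : E, A * ‖p‖ - C ≤ H (x, p) := by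
  obtain ⟨C₀, hC₀⟩ := ((isCompact_closedBall x₀ 1).prod
    (isCompact_closedBall (0:E) 0)).exists_bound_of_continuousOn
    hH.smooth.continuous.continuousOn
  have hC₀0 : 0 ≤ C₀ := le_trans (norm_nonneg _) (hC₀ (x₀, 0)
    ⟨Metric.mem_closedBall_self zero_le_one, Metric.mem_closedBall_self le_rfl⟩)
  have hC₀' : ∀ x ∈ Metric.closedBall x₀ 1, |H (x, 0)| ≤ C₀ := fun x hx =>
    hC₀ (x, 0) ⟨hx, Metric.mem_closedBall_self le_rfl⟩
  -- superlinearity at x₀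
  have hev := (hH.superlinear x₀).eventually (eventually_ge_atTop (A + C₀ + 1))
  rw [eventually_comap] at hev
  rw [eventually_atTop] at hev
  obtain ⟨R₀, hR₀⟩ := hev
  set R : ℝ := max R₀ 1 with hRdef
  have hR1 : 1 ≤ R := le_max_right _ _
  have hRpos : 0 < R := lt_of_lt_of_le one_pos hR1
  have hsphere : ∀ p : E, ‖p‖ = R → A * R + C₀ + 1/2 < H (x₀, p) := by
    intro p hp
    have h := hR₀ R (le_max_left _ _) p hp
    rw [le_div_iff₀ (by rw [hp]; exact hRpos)] at h
    rw [hp] at h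
    nlinarith
  set U : Set (EuclideanSpace ℝ (Fin n) × EuclideanSpace ℝ (Fin n)) :=
    {q | A * R + C₀ + 1/2 < H q} with hUdef
  have hUopen : IsOpen U := isOpen_lt continuous_const hH.smooth.continuous
  have hsub : {x₀} ×ˢ Metric.sphere (0:E) R ⊆ U := by
    rintro ⟨a, b⟩ ⟨ha, hb⟩
    rcases ha with rfl
    exact hsphere b (mem_sphere_zero_iff_norm.1 hb)
  obtain ⟨v, w, hvopen, hwopen, hxv, hSw, hvw⟩ :=
    generalized_tube_lemma isCompact_singleton (isCompact_sphere (0:E) R) hUopen hsub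
  obtain ⟨δ₀, hδ₀, hball⟩ := Metric.isOpen_iff.1 hvopen x₀ (hxv rfl)
  obtain ⟨C₂, hC₂⟩ := ((isCompact_closedBall x₀ 1).prod
    (isCompact_closedBall (0:E) R)).exists_bound_of_continuousOn
    hH.smooth.continuous.continuousOn
  have hC₂0 : 0 ≤ C₂ := le_trans (norm_nonneg _) (hC₂ (x₀, 0)
    ⟨Metric.mem_closedBall_self zero_le_one, Metric.mem_closedBall_self hRpos.le⟩)
  refine ⟨min δ₀ 1, lt_min hδ₀ one_pos, A * R + C₂, by positivity, ?_⟩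
  intro x hx p
  have hx1 : x ∈ Metric.closedBall x₀ 1 :=
    Metric.mem_closedBall.2 (le_trans (Metric.mem_ball.1 hx).le (min_le_right _ _))
  have hxv' : x ∈ v := hball (Metric.mem_ball.1 (Metric.ball_subset_ball (min_le_left _ _) hx))
  by_cases hp : ‖p‖ ≤ R
  · have hb : |H (x, p)| ≤ C₂ := hC₂ (x, p) ⟨hx1, mem_closedBall_zero_iff.2 hp⟩
    have := abs_le.1 hb
    nlinarith [mul_le_mul_of_nonneg_left hp hA]
  · push_neg at hp
    have hps : 0 < ‖p‖ := lt_trans hRpos hp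
    set θ : ℝ := R / ‖p‖ with hθdef
    have hθpos : 0 < θ := div_pos hRpos hps
    have hθle : θ ≤ 1 := (div_le_one hps).2 hp.le
    have hθp : θ * ‖p‖ = R := div_mul_cancel₀ _ hps.ne'
    have hqnorm : ‖θ • p‖ = R := by
      rw [norm_smul, Real.norm_eq_abs, abs_of_pos hθpos, hθp]
    have hseg := slice_segment (slice_contDiff hH x) (posdef' hH x) 0 p
      (1 - θ) θ (by linarith) hθpos.le (by ring)
    rw [smul_zero, zero_add] at hseg
    have hqU : (x, θ • p) ∈ U := hvw ⟨hxv', hSw (mem_sphere_zero_iff_norm.2 hqnorm)⟩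
    have hqU' : A * R + C₀ + 1/2 < H (x, θ • p) := hqU
    have h30 : |H (x, 0)| ≤ C₀ := hC₀' x hx1
    have h3 : H (x, 0) ≤ C₀ := (abs_le.1 h30).2
    have h6 : θ * (A * ‖p‖) ≤ θ * H (x, p) := by
      have h7 : (1 - θ) * H (x, 0) ≤ (1 - θ) * C₀ :=
        mul_le_mul_of_nonneg_left h3 (by linarith)
      have h8 : A * R + C₀ + 1/2 - (1 - θ) * C₀ ≤ θ * H (x, p) := by linarith
      have h9 : A * (θ * ‖p‖) ≤ A * R := by rw [hθp]
      nlinarith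
    have h10 : A * ‖p‖ ≤ H (x, p) := le_of_mul_le_mul_left h6 hθpos
    nlinarith

lemma uniform_superlinear (hH : IsTonelli H) (A : ℝ) (hA : 0 ≤ A) :
    ∃ C, 0 ≤ C ∧ ∀ (x p : EuclideanSpace ℝ (Fin n)), A * ‖p‖ - C ≤ H (x, p) := by
  choose δ hδ C hC0 hC using local_superlinear hH A hA
  obtain ⟨t, -, ht⟩ := (isCompact_closedBall (0:E) (Real.sqrt n)).elim_nhds_subcover
    (fun x₀ => Metric.ball x₀ (δ x₀)) (fun x₀ _ => Metric.ball_mem_nhds x₀ (hδ x₀))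
  refine ⟨∑ x₀ ∈ t, C x₀, Finset.sum_nonneg fun i _ => hC0 i, fun x p => ?_⟩
  obtain ⟨y, hyn, hxy⟩ := exists_fund hH x
  have hyK : y ∈ Metric.closedBall (0:E) (Real.sqrt n) := mem_closedBall_zero_iff.2 hyn
  have := ht hyK
  simp only [mem_iUnion, exists_prop] at this
  obtain ⟨x₀, hx₀t, hyx₀⟩ := this
  have h1 := hC x₀ y hyx₀ p
  have h2 : C x₀ ≤ ∑ x₀ ∈ t, C x₀ := Finset.single_le_sum (fun i _ => hC0 i) hx₀t
  rw [hxy p]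
  linarith

lemma lag_bddAbove (hH : IsTonelli H) (x v : E) :
    BddAbove (Set.range fun p : E => (inner ℝ p v : ℝ) - H (x, p)) := by
  obtain ⟨C, -, hC⟩ := uniform_superlinear hH ‖v‖ (norm_nonneg v)
  refine ⟨C, forall_mem_range.2 fun p => ?_⟩
  have h1 := real_inner_le_norm p v
  have h2 := hC x p
  nlinarith

lemma fenchel_le (hH : IsTonelli H) (x v p : E) :
    (inner ℝ p v : ℝ) - H (x, p) ≤ Lag H x v :=
  le_ciSup (lag_bddAbove hH x v) p

lemma pv_sub_lag_le (hH : IsTonelli H) (x v p : E) :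
    (inner ℝ p v : ℝ) - Lag H x v ≤ H (x, p) := by
  have := fenchel_le hH x v p; linarith

lemma lag_ub (hH : IsTonelli H) {A C : ℝ} (hAC : ∀ x p : E, A * ‖p‖ - C ≤ H (x, p))
    {x v : E} (hv : ‖v‖ ≤ A) : Lag H x v ≤ C := by
  apply ciSup_le
  intro p
  have h1 := real_inner_le_norm p v
  have h2 := hAC x p
  nlinarith [norm_nonneg p, mul_le_mul_of_nonneg_left hv (norm_nonneg p)]

lemma lag_lb (hH : IsTonelli H) (x v : E) : -H (x, 0) ≤ Lag H x v := by
  have := fenchel_le hH x v 0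
  simpa using this

lemma lag_lb' (hH : IsTonelli H) : ∃ C₀, 0 ≤ C₀ ∧ ∀ x v : E, -C₀ ≤ Lag H x v := by
  obtain ⟨C₀, hC₀⟩ := slice_bound hH 0
  have h0 : 0 ≤ C₀ := le_trans (abs_nonneg _) (hC₀  0 0 (by simp))
  refine ⟨C₀, h0, fun x v => ?_⟩
  have h1 := hC₀ x 0 (by simp)
  have := lag_lb hH x v
  have := (abs_le.1 h1).2
  linarith

lemma lag_dual (hH : IsTonelli H) (x p : E) {c : ℝ}
    (h : ∀ v : E, (inner ℝ p v : ℝ) - Lag H x v ≤ c) : H (x, p) ≤ c := by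
  set g := fun q : E => H (x, q) with hgdef
  set v := gradient g p with hvdef
  have hg : ContDiff ℝ 2 g := slice_contDiff hH x
  have hL : Lag H x v ≤ (inner ℝ p v : ℝ) - H (x, p) := by
    apply ciSup_le
    intro q
    have h1 := line_tangent hg (posdef' hH x) p q
    have h2 : fderiv ℝ g p (q - p) = (inner ℝ v (q - p) : ℝ) := by
      rw [hvdef]
      exact (InnerProductSpace.toDual_symm_apply).symm
    rw [h2, inner_sub_right] at h1
    have e1 := real_inner_comm v q
    have e2 := real_inner_comm v p
    simp only [hgdef] at h1
    nlinarith
  have := h v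
  linarith

lemma lag_cont_at (hH : IsTonelli H) (x v : E) {ε : ℝ} (hε : 0 < ε) :
    ∃ δ > 0, ∀ x' v' : E, dist x' x < δ → dist v' v < δ →
      |Lag H x' v' - Lag H x v| ≤ ε := by
  obtain ⟨C, hC0, hC⟩ := uniform_superlinear hH (‖v‖ + 2) (by positivity)
  obtain ⟨C₀, hC₀0, hC₀⟩ := lag_lb' hH
  set M : ℝ := C + C₀ + 1 + ε with hMdef
  have hM0 : 0 < M := by positivity
  have hcomp : IsCompact ((Metric.closedBall x 1) ×ˢ (Metric.closedBall (0:E) M)) :=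
    (isCompact_closedBall x 1).prod (isCompact_closedBall (0:E) M)
  have huc := hcomp.uniformContinuousOn_of_continuous hH.smooth.continuous.continuousOn
  rw [Metric.uniformContinuousOn_iff] at huc
  obtain ⟨δ₁, hδ₁, hd₁⟩ := huc (ε/4) (by positivity)
  set δ : ℝ := min 1 (min δ₁ (ε/(4*(M+1)))) with hδdef
  have hδ0 : 0 < δ := lt_min one_pos (lt_min hδ₁ (by positivity))
  have hδle1 : δ ≤ 1 := min_le_left _ _
  have hδleδ₁ : δ ≤ δ₁ := le_trans (min_le_right _ _) (min_le_left _ _)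
  have hδleε : δ ≤ ε/(4*(M+1)) := le_trans (min_le_right _ _) (min_le_right _ _)
  refine ⟨δ, hδ0, fun x' v' hx' hv' => ?_⟩
  have hv'd : ‖v' - v‖ < δ := by rwa [dist_eq_norm] at hv'
  have hvnorm : ‖v'‖ ≤ ‖v‖ + 1 := by
    have he : v' = v + (v' - v) := by abel
    have h := norm_add_le v (v' - v)
    rw [← he] at h
    linarith [lt_of_lt_of_le hv'd hδle1]
  have hkey : ∀ p : E, ‖p‖ ≤ M →
      |((inner ℝ p v' : ℝ) - H (x', p)) - ((inner ℝ p v : ℝ) - H (x, p))| ≤ ε/2 := by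
    intro p hp
    have hi : |(inner ℝ p v' : ℝ) - (inner ℝ p v : ℝ)| ≤ ‖p‖ * ‖v' - v‖ := by
      rw [← inner_sub_right]
      exact abs_real_inner_le_norm p (v' - v)
    have hHd : |H (x', p) - H (x, p)| ≤ ε/4 := by
      have hmem1 : (x', p) ∈ (Metric.closedBall x 1) ×ˢ (Metric.closedBall (0:E) M) :=
        ⟨Metric.mem_closedBall.2 (hx'.le.trans hδle1), mem_closedBall_zero_iff.2 hp⟩
      have hmem2 : (x, p) ∈ (Metric.closedBall x 1) ×ˢ (Metric.closedBall (0:E) M) :=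
        ⟨Metric.mem_closedBall_self zero_le_one, mem_closedBall_zero_iff.2 hp⟩
      have hdist : dist (x', p) (x, p) < δ₁ := by
        rw [Prod.dist_eq]
        simp only [dist_self]
        rw [max_eq_left dist_nonneg]
        exact lt_of_lt_of_le hx' hδleδ₁
      have h9 := hd₁ _ hmem1 _ hmem2 hdist
      rw [Real.dist_eq] at h9
      exact h9.le
    have hin : ‖p‖ * ‖v' - v‖ ≤ ε/4 := by
      have h2 : ‖p‖ * ‖v' - v‖ ≤ M * δ :=
        mul_le_mul hp hv'd.le (norm_nonneg _) hM0.le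
      have h3 : M * δ ≤ M * (ε/(4*(M+1))) := mul_le_mul_of_nonneg_left hδleε hM0.le
      have h4 : M * (ε/(4*(M+1))) ≤ ε/4 := by
        rw [mul_div_assoc', div_le_div_iff₀ (by positivity) (by positivity)]
        nlinarith
      exact h2.trans (h3.trans h4)
    have he : ((inner ℝ p v' : ℝ) - H (x', p)) - ((inner ℝ p v : ℝ) - H (x, p))
        = ((inner ℝ p v' : ℝ) - (inner ℝ p v : ℝ)) + (H (x, p) - H (x', p)) := by ring
    rw [he]
    calc |((inner ℝ p v' : ℝ) - (inner ℝ p v : ℝ)) + (H (x, p) - H (x', p))|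
        ≤ |(inner ℝ p v' : ℝ) - (inner ℝ p v : ℝ)| + |H (x, p) - H (x', p)| := abs_add_le _ _
      _ = |(inner ℝ p v' : ℝ) - (inner ℝ p v : ℝ)| + |H (x', p) - H (x, p)| := by
          rw [abs_sub_comm (H (x, p)) (H (x', p))]
      _ ≤ ε/4 + ε/4 := add_le_add (le_trans hi hin) hHd
      _ = ε/2 := by ring
  have hupper : Lag H x' v' ≤ Lag H x v + ε := by
    apply ciSup_le
    intro p
    by_cases hp : ‖p‖ ≤ M
    · have h1 := (abs_le.1 (hkey p hp)).2
      have h2 := fenchel_le hH x v p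
      linarith
    · push_neg at hp
      have h1 := real_inner_le_norm p v'
      have h2 := hC x' p
      have h3 := hC₀ x v
      nlinarith [mul_le_mul_of_nonneg_left hvnorm (norm_nonneg p)]
  have hlower : Lag H x v - ε ≤ Lag H x' v' := by
    have hlt : Lag H x v - ε/2 < ⨆ p : E, ((inner ℝ p v : ℝ) - H (x, p)) := by
      have : Lag H x v = ⨆ p : E, ((inner ℝ p v : ℝ) - H (x, p)) := rfl
      rw [← this]; linarith
    obtain ⟨p₀, hp₀⟩ := exists_lt_of_lt_ciSup hlt
    have hp₀M : ‖p₀‖ ≤ M := by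
      have h1 := real_inner_le_norm p₀ v
      have h2 := hC x p₀
      have h3 := hC₀ x v
      nlinarith [norm_nonneg p₀]
    have h4 := (abs_le.1 (hkey p₀ hp₀M)).1
    have h5 := fenchel_le hH x' v' p₀
    linarith
  exact abs_le.2 ⟨by linarith, by linarith⟩

lemma lag_continuous (hH : IsTonelli H) :
    Continuous (fun q : E × E => Lag H q.1 q.2) := by
  rw [Metric.continuous_iff]
  rintro ⟨x, v⟩ ε hε
  obtain ⟨δ, hδ0, hδ⟩ := lag_cont_at hH x v (half_pos hε)
  refine ⟨δ, hδ0, ?_⟩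
  rintro ⟨x', v'⟩ hd
  rw [Prod.dist_eq] at hd
  have h1 : dist x' x < δ := lt_of_le_of_lt (le_max_left _ _) hd
  have h2 : dist v' v < δ := lt_of_le_of_lt (le_max_right _ _) hd
  have := hδ x' v' h1 h2
  rw [Real.dist_eq]
  calc |Lag H x' v' - Lag H x v| ≤ ε/2 := this
    _ < ε := half_lt_self hε

lemma lipschitz_ftc {g : ℝ → ℝ} {K : NNReal} (hg : LipschitzWith K g) {φ : ℝ → ℝ} {a b : ℝ}
    (hab : a ≤ b) (hφ : IntervalIntegrable φ volume a b)
    (hd : ∀ᵐ s, s ∈ Set.Ioo a b → ∃ d, HasDerivAt g d s ∧ d ≤ φ s) :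
    g b - g a ≤ ∫ s in a..b, φ s := by
  set F : ℝ → ℝ := fun s => (K : ℝ) * s - g s with hFdef
  have hFmono : Monotone F := by
    intro s t hst
    have h1 : |g t - g s| ≤ (K : ℝ) * |t - s| := by
      have := hg.dist_le_mul t s
      rwa [Real.dist_eq, Real.dist_eq] at this
    have h2 := (abs_le.1 h1).2
    rw [abs_of_nonneg (by linarith : (0:ℝ) ≤ t - s)] at h2
    simp only [hFdef]
    nlinarith
  set ρ : ℝ → ℝ := fun x => (hFmono.stieltjesFunction.measure.rnDeriv volume x).toReal with hρdef
  have hFd : ∀ᵐ x, HasDerivAt F (ρ x) x := hFmono.ae_hasDerivAt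
  have hFcont : Continuous F := (continuous_const.mul continuous_id).sub hg.continuous
  have hsfF : ∀ x, hFmono.stieltjesFunction x = F x := by
    intro x
    rw [hFmono.stieltjesFunction_eq]
    exact rightLim_eq_of_tendsto
      ((hFcont.tendsto x).mono_left nhdsWithin_le_nhds)
  have hρ0 : ∀ x, 0 ≤ ρ x := fun x => ENNReal.toReal_nonneg
  have hρmeas : Measurable ρ := (Measure.measurable_rnDeriv _ _).ennreal_toReal
  -- ∫ ρ over Ioc a b ≤ F b - F a
  have hlin : ∫⁻ x in Ioc a b, hFmono.stieltjesFunction.measure.rnDeriv volume x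
      ≤ ENNReal.ofReal (F b - F a) := by
    refine le_trans (Measure.setLIntegral_rnDeriv_le _) ?_
    rw [hFmono.stieltjesFunction.measure_Ioc]
    rw [hsfF, hsfF]
  have hρint : IntegrableOn ρ (Ioc a b) := by
    refine ⟨hρmeas.aestronglyMeasurable.restrict, ?_⟩
    rw [hasFiniteIntegral_iff_norm]
    calc ∫⁻ x in Ioc a b, ENNReal.ofReal ‖ρ x‖
        = ∫⁻ x in Ioc a b, ENNReal.ofReal (ρ x) := by
          congr 1; ext x; rw [Real.norm_eq_abs, abs_of_nonneg (hρ0 x)]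
      _ ≤ ∫⁻ x in Ioc a b, hFmono.stieltjesFunction.measure.rnDeriv volume x :=
          lintegral_mono fun x => ENNReal.ofReal_toReal_le
      _ ≤ ENNReal.ofReal (F b - F a) := hlin
      _ < ⊤ := ENNReal.ofReal_lt_top
  have hint : ∫ x in Ioc a b, ρ x ≤ F b - F a := by
    rw [integral_eq_lintegral_of_nonneg_ae (Eventually.of_forall hρ0)
      hρmeas.aestronglyMeasurable.restrict]
    have h1 : ∫⁻ x in Ioc a b, ENNReal.ofReal (ρ x) ≤ ENNReal.ofReal (F b - F a) :=
      le_trans (lintegral_mono fun x => ENNReal.ofReal_toReal_le) hlin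
    calc (∫⁻ x in Ioc a b, ENNReal.ofReal (ρ x)).toReal
        ≤ (ENNReal.ofReal (F b - F a)).toReal := ENNReal.toReal_mono ENNReal.ofReal_ne_top h1
      _ = F b - F a := ENNReal.toReal_ofReal (by have := hFmono hab; linarith)
  -- a.e. inequality : K - ρ ≤ φ on Ioo a b
  have hae : ∀ᵐ s, s ∈ Ioo a b → (K : ℝ) - ρ s ≤ φ s := by
    filter_upwards [hFd, hd] with s hs1 hs2 hsmem
    obtain ⟨d, hdg, hdφ⟩ := hs2 hsmem
    have hFd' : HasDerivAt F ((K : ℝ) - d) s := by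
      have := ((hasDerivAt_id s).const_mul (K : ℝ)).sub hdg; simp only [mul_one] at this; exact this
    have : ρ s = (K : ℝ) - d := hs1.unique hFd'
    rw [this]
    simpa using hdφ
  -- compare integrals
  have hKρint : IntervalIntegrable (fun s => (K : ℝ) - ρ s) volume a b := by
    rw [intervalIntegrable_iff_integrableOn_Ioc_of_le hab]
    exact (integrableOn_const measure_Ioc_lt_top.ne).sub hρint
  have hmono2 : ∫ s in a..b, ((K : ℝ) - ρ s) ≤ ∫ s in a..b, φ s := by
    apply intervalIntegral.integral_mono_ae_restrict hab hKρint hφ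
    have hIoo : ∀ᵐ s ∂(volume.restrict (Icc a b)), s ∈ Ioo a b → (K : ℝ) - ρ s ≤ φ s :=
      ae_restrict_of_ae hae
    have hbd : ∀ᵐ s ∂(volume.restrict (Icc a b)), s ∈ Ioo a b := by
      have hsub : Icc a b \ Ioo a b ⊆ {a, b} := by
        intro x hx
        rcases hx with ⟨⟨h1, h2⟩, h3⟩
        simp only [mem_Ioo, not_and, not_lt] at h3
        rcases lt_or_eq_of_le h1 with h1' | h1'
        · exact Or.inr (le_antisymm (h3 h1') h2).symm
        · exact Or.inl h1'.symm
      have hdiff : (volume : Measure ℝ) (Icc a b \ Ioo a b) = 0 :=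
        measure_mono_null hsub (((Set.finite_singleton b).insert a).measure_zero _)
      rw [ae_restrict_iff' measurableSet_Icc, ae_iff]
      refine measure_mono_null ?_ hdiff
      intro x hx
      push_neg at hx
      exact ⟨hx.1, hx.2⟩
    filter_upwards [hIoo, hbd] with s h1 h2 using h1 h2
  have hveq : ∫ s in a..b, ((K : ℝ) - ρ s) = (K : ℝ) * (b - a) - ∫ x in Ioc a b, ρ x := by
    rw [intervalIntegral.integral_sub intervalIntegrable_const
      (by rw [intervalIntegrable_iff_integrableOn_Ioc_of_le hab]; exact hρint)]
    rw [intervalIntegral.integral_const, intervalIntegral.integral_of_le hab]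
    simp [smul_eq_mul, mul_comm]
  have hfinal : g b - g a = (K : ℝ) * (b - a) - (F b - F a) := by
    simp only [hFdef]; ring
  rw [hfinal]
  have := hint
  rw [hveq] at hmono2
  linarith

lemma grad_inner (u : E → ℝ) (x w : E) :
    (inner ℝ (gradient u x) w : ℝ) = fderiv ℝ u x w := by
  simp [gradient, InnerProductSpace.toDual_symm_apply]

lemma integrand_cont (hH : IsTonelli H) (c : ℝ) {γ w : ℝ → E}
    (hγ : Continuous γ) (hw : Continuous w) :
    Continuous fun s => c + Lag H (γ s) (w s) :=
  continuous_const.add ((lag_continuous hH).comp (hγ.prodMk hw))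

lemma line_curve_contDiff (x v : E) : ContDiff ℝ 2 (fun s : ℝ => x + s • v) :=
  contDiff_const.add (contDiff_id.smul contDiff_const)

lemma line_curve_deriv (x v : E) : deriv (fun s : ℝ => x + s • v) = fun _ => v := by
  funext s
  have h : HasDerivAt (fun s : ℝ => x + s • v) v s := by
    simpa using ((hasDerivAt_id s).smul_const v).const_add x
  exact h.deriv

lemma action_bddBelow (hH : IsTonelli H) (c t : ℝ) (ht : 0 < t) (x y : E) :
    BddBelow { a | ∃ γ : ℝ → E, ContDiff ℝ 2 γ ∧ γ 0 = x ∧ γ t = y ∧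
      a = ∫ s in (0:ℝ)..t, (c + Lag H (γ s) (deriv γ s)) } := by
  obtain ⟨C₀, hC₀0, hC₀⟩ := lag_lb' hH
  refine ⟨(c - C₀) * t, ?_⟩
  rintro a ⟨γ, hγ, h0, hT, rfl⟩
  have hcont : Continuous fun s => c + Lag H (γ s) (deriv γ s) :=
    integrand_cont hH c hγ.continuous (hγ.continuous_deriv (by norm_num))
  have hmono := intervalIntegral.integral_mono_on ht.le
    (intervalIntegrable_const (c := c - C₀))
    (hcont.intervalIntegrable 0 t : IntervalIntegrable _ volume 0 t)
    (fun s _ => by have := hC₀ (γ s) (deriv γ s); linarith)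
  rw [intervalIntegral.integral_const] at hmono
  simpa [smul_eq_mul, mul_comm] using hmono

lemma action_nonempty (hH : IsTonelli H) (c t : ℝ) (ht : 0 < t) (x y : E) :
    ∃ a, a ∈ { a | ∃ γ : ℝ → E, ContDiff ℝ 2 γ ∧ γ 0 = x ∧ γ t = y ∧
      a = ∫ s in (0:ℝ)..t, (c + Lag H (γ s) (deriv γ s)) } := by
  refine ⟨_, ⟨fun s : ℝ => x + (s/t) • (y - x), ?_, by simp, ?_, rfl⟩⟩
  · simpa [div_eq_mul_inv] using
      (contDiff_const.add ((contDiff_id.mul contDiff_const).smul contDiff_const) :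
        ContDiff ℝ 2 fun s : ℝ => x + (s * t⁻¹) • (y - x))
  · show x + (t/t) • (y - x) = y
    rw [div_self ht.ne']
    simp

lemma subsolution_of_action_le (hH : IsTonelli H) {c : ℝ} {u : E → ℝ}
    (hLip : ∃ K, LipschitzWith K u) (hper : ZPeriodic u)
    (hA : ∀ t > (0:ℝ), ∀ x y : E, u y - u x ≤ action H c t x y) :
    IsSubsolution H c u := by
  obtain ⟨K, hK⟩ := hLip
  refine ⟨⟨K, hK⟩, hper, ?_⟩
  filter_upwards [hK.ae_differentiableAt] with x hx
  refine ⟨hx, ?_⟩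
  apply lag_dual hH
  intro v
  rw [grad_inner]
  -- the basic inequality along straight segments
  have hline : ∀ t > (0:ℝ), u (x + t • v) - u x ≤ ∫ s in (0:ℝ)..t, (c + Lag H (x + s • v) v) := by
    intro t ht
    refine le_trans (hA t ht x (x + t • v)) ?_
    refine csInf_le (action_bddBelow hH c t ht x (x + t • v)) ?_
    refine ⟨fun s : ℝ => x + s • v, line_curve_contDiff x v, by simp, rfl, ?_⟩
    rw [line_curve_deriv]
  have hφ : Continuous fun s : ℝ => c + Lag H (x + s • v) v :=
    integrand_cont hH c (line_curve_contDiff x v).continuous continuous_const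
  -- slope limits
  have hder1 : HasDerivAt (fun t : ℝ => u (x + t • v)) (fderiv ℝ u x v) 0 := by
    have hm : HasDerivAt (fun t : ℝ => x + t • v) v 0 := by
      simpa using ((hasDerivAt_id (0:ℝ)).smul_const v).const_add x
    have hx0 : x = x + (0:ℝ) • v := by simp
    have hfd : HasFDerivAt u (fderiv ℝ u x) (x + (0:ℝ) • v) := hx0 ▸ hx.hasFDerivAt
    exact hfd.comp_hasDerivAt 0 hm
  have hder2 : HasDerivAt (fun t : ℝ => ∫ s in (0:ℝ)..t, (c + Lag H (x + s • v) v))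
      (c + Lag H x v) 0 := by
    have h := intervalIntegral.integral_hasDerivAt_right
      (hφ.intervalIntegrable 0 0)
      (hφ.stronglyMeasurableAtFilter volume (nhds 0))
      (hφ.continuousAt)
    simpa using h
  have h1 := hasDerivAt_iff_tendsto_slope.1 hder1
  have h2 := hasDerivAt_iff_tendsto_slope.1 hder2
  have h1' := h1.mono_left (nhdsWithin_mono 0 (fun s hs => ne_of_gt hs : Ioi (0:ℝ) ⊆ {(0:ℝ)}ᶜ))
  have h2' := h2.mono_left (nhdsWithin_mono 0 (fun s hs => ne_of_gt hs : Ioi (0:ℝ) ⊆ {(0:ℝ)}ᶜ))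
  have hle : fderiv ℝ u x v ≤ c + Lag H x v := by
    refine le_of_tendsto_of_tendsto h1' h2' ?_
    filter_upwards [self_mem_nhdsWithin] with t ht
    have ht' : (0:ℝ) < t := ht
    rw [slope_def_field, slope_def_field]
    simp only [intervalIntegral.integral_same, zero_smul, add_zero, sub_zero]
    exact (div_le_div_iff_of_pos_right ht').2 (hline t ht')
  linarith [hle]

lemma ae_translate {N : Set (EuclideanSpace ℝ (Fin n))} (hN : MeasurableSet N)
    (hN0 : volume N = 0) {γ : ℝ → E} (hγ : Continuous γ) (t : ℝ) :
    ∀ᵐ z : E, (volume.restrict (Ioc (0:ℝ) t)) {s | γ s + z ∈ N} = 0 := by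
  set μ₁ := (volume : Measure ℝ).restrict (Ioc (0:ℝ) t) with hμ₁
  set S : Set (ℝ × EuclideanSpace ℝ (Fin n)) := {q | γ q.1 + q.2 ∈ N} with hS
  have hSm : MeasurableSet S :=
    (((hγ.comp continuous_fst).add continuous_snd).measurable) hN
  have hslice : ∀ s : ℝ, volume {z : E | γ s + z ∈ N} = 0 := by
    intro s
    have h : {z : E | γ s + z ∈ N} = (fun z => γ s + z) ⁻¹' N := rfl
    rw [h, measure_preimage_add]
    exact hN0
  have hprod : (μ₁.prod volume) S = 0 := by
    rw [Measure.measure_prod_null hSm]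
    exact Eventually.of_forall fun s => hslice s
  have hswapm : MeasurableSet (Prod.swap ⁻¹' S : Set (EuclideanSpace ℝ (Fin n) × ℝ)) :=
    hSm.preimage measurable_swap
  have hswap : (volume.prod μ₁) (Prod.swap ⁻¹' S) = 0 := by
    have h1 : (volume : Measure (EuclideanSpace ℝ (Fin n))).prod μ₁
        = Measure.map Prod.swap (μ₁.prod volume) := (Measure.prod_swap).symm
    rw [h1, Measure.map_apply measurable_swap hswapm]
    rw [← Set.preimage_comp, Prod.swap_swap_eq, Set.preimage_id]; exact hprod
  rw [Measure.measure_prod_null hswapm] at hswap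
  exact hswap

lemma clamp_lipschitz (t : ℝ) : LipschitzWith 1 (fun s : ℝ => min (max s 0) t) := by
  rw [lipschitzWith_iff_dist_le_mul]
  intro s s'
  rw [Real.dist_eq, Real.dist_eq]
  have h1 : |min (max s 0) t - min (max s' 0) t| ≤ max |max s 0 - max s' 0| |t - t| :=
    abs_min_sub_min_le_max _ _ _ _
  have h2 : |max s 0 - max s' 0| ≤ |s - s'| := abs_max_sub_max_le_abs _ _ _
  simp only [sub_self, abs_zero] at h1
  rw [NNReal.coe_one, one_mul]
  calc |min (max s 0) t - min (max s' 0) t| ≤ max |max s 0 - max s' 0| 0 := h1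
    _ ≤ |s - s'| := by rw [max_eq_left (abs_nonneg _)]; exact h2

set_option maxHeartbeats 1000000 in
lemma subsolution_action_le (hH : IsTonelli H) {c : ℝ} {u : EuclideanSpace ℝ (Fin n) → ℝ}
    {K : NNReal} (hK : LipschitzWith K u)
    (hae : ∀ᵐ x : EuclideanSpace ℝ (Fin n), DifferentiableAt ℝ u x ∧ H (x, gradient u x) ≤ c)
    {t : ℝ} (ht : 0 < t) {γ : ℝ → EuclideanSpace ℝ (Fin n)} (hγ : ContDiff ℝ 2 γ) :
    u (γ t) - u (γ 0) ≤ ∫ s in (0:ℝ)..t, (c + Lag H (γ s) (deriv γ s)) := by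
  classical
  -- measurable null superset of the bad set
  have hbad : volume {x : EuclideanSpace ℝ (Fin n) |
      ¬(DifferentiableAt ℝ u x ∧ H (x, gradient u x) ≤ c)} = 0 := by
    rw [← ae_iff] ; exact hae
  obtain ⟨N, hsubN, hNm, hN0⟩ := exists_measurable_superset_of_null hbad
  -- clamp and clamped curve
  set cl : ℝ → ℝ := fun s => min (max s 0) t with hcl
  have hcl0 : cl 0 = 0 := by simp [hcl, ht.le]
  have hclt : cl t = t := by simp [hcl, ht.le]
  have hclmem : ∀ s, cl s ∈ Icc 0 t := fun s =>
    ⟨le_min (le_max_right s 0) ht.le, min_le_right _ _⟩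
  have hclid : ∀ s ∈ Ioo 0 t, cl s = s := fun s hs => by
    rw [hcl]; simp [max_eq_left hs.1.le, min_eq_left hs.2.le, hs.1.le, hs.2.le]
  -- γ is Lipschitz on [0, t]
  obtain ⟨Cγ, hCγ⟩ := isCompact_Icc.exists_bound_of_continuousOn
    ((hγ.continuous_deriv (by norm_num)).continuousOn (s := Icc 0 t))
  have hCγ0 : 0 ≤ Cγ := le_trans (norm_nonneg _) (hCγ 0 ⟨le_rfl, ht.le⟩)
  have hγlip : LipschitzOnWith Cγ.toNNReal γ (Icc 0 t) := by
    apply (convex_Icc (0:ℝ) t).lipschitzOnWith_of_nnnorm_deriv_le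
      (fun x _ => hγ.differentiable (by norm_num) x)
    intro x hx
    rw [← NNReal.coe_le_coe, coe_nnnorm, Real.coe_toNNReal _ hCγ0]
    exact hCγ x hx
  -- the key estimate for a good translation z
  have key : ∀ z : EuclideanSpace ℝ (Fin n),
      (volume.restrict (Ioc (0:ℝ) t)) {s | γ s + z ∈ N} = 0 →
      u (γ t + z) - u (γ 0 + z) ≤ ∫ s in (0:ℝ)..t, (c + Lag H (γ s + z) (deriv γ s)) := by
    intro z hz
    set g : ℝ → ℝ := fun s => u (γ (cl s) + z) with hg
    have hmz : LipschitzWith Cγ.toNNReal (fun s => γ (cl s) + z) := by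
      rw [lipschitzWith_iff_dist_le_mul]
      intro s s'
      rw [dist_add_right]
      calc dist (γ (cl s)) (γ (cl s'))
          ≤ Cγ.toNNReal * dist (cl s) (cl s') :=
            lipschitzOnWith_iff_dist_le_mul.1 hγlip _ (hclmem s) _ (hclmem s')
        _ ≤ Cγ.toNNReal * dist s s' := by
            have := lipschitzWith_iff_dist_le_mul.1 (clamp_lipschitz t) s s'
            rw [NNReal.coe_one, one_mul] at this
            exact mul_le_mul_of_nonneg_left this (NNReal.coe_nonneg _)
    have hglip : LipschitzWith (K * Cγ.toNNReal) g := hK.comp hmz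
    have hφcont : Continuous fun s => c + Lag H (γ s + z) (deriv γ s) :=
      integrand_cont hH c (hγ.continuous.add continuous_const)
        (hγ.continuous_deriv (by norm_num))
    have hAm : MeasurableSet {s : ℝ | γ s + z ∈ N} :=
      ((hγ.continuous.add continuous_const).measurable) hNm
    have hz' : volume ({s : ℝ | γ s + z ∈ N} ∩ Ioc 0 t) = 0 := by
      rwa [Measure.restrict_apply hAm] at hz
    have hae2 : ∀ᵐ s : ℝ, s ∉ ({s : ℝ | γ s + z ∈ N} ∩ Ioc 0 t) := by
      rw [ae_iff]
      simp only [not_not]; exact hz'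
    have hd : ∀ᵐ s : ℝ, s ∈ Ioo 0 t → ∃ d, HasDerivAt g d s ∧
        d ≤ c + Lag H (γ s + z) (deriv γ s) := by
      filter_upwards [hae2] with s hs hsIoo
      have hnot : γ s + z ∉ N := fun hmem => hs ⟨hmem, Ioo_subset_Ioc_self hsIoo⟩
      have hP : DifferentiableAt ℝ u (γ s + z) ∧ H (γ s + z, gradient u (γ s + z)) ≤ c := by
        by_contra hcon
        exact hnot (hsubN hcon)
      have hm : HasDerivAt (fun s' : ℝ => γ s' + z) (deriv γ s) s :=
        ((hγ.differentiable (by norm_num) s).hasDerivAt).add_const z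
      have hgd : HasDerivAt (fun s' : ℝ => u (γ s' + z))
          (fderiv ℝ u (γ s + z) (deriv γ s)) s :=
        (hP.1.hasFDerivAt).comp_hasDerivAt s hm
      have hev : g =ᶠ[nhds s] fun s' : ℝ => u (γ s' + z) := by
        filter_upwards [isOpen_Ioo.mem_nhds hsIoo] with s' hs'
        rw [hg]
        simp only [hclid s' hs']
      refine ⟨fderiv ℝ u (γ s + z) (deriv γ s), hgd.congr_of_eventuallyEq hev, ?_⟩
      have h1 := pv_sub_lag_le hH (γ s + z) (deriv γ s) (gradient u (γ s + z))
      rw [grad_inner] at h1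
      linarith [hP.2]
    have hftc := lipschitz_ftc hglip ht.le (hφcont.intervalIntegrable 0 t) hd
    rw [hg] at hftc
    simp only [hcl0, hclt] at hftc
    exact hftc
  -- choose a sequence of good translations tending to 0
  have hgood := ae_translate hNm hN0 hγ.continuous t
  have hex : ∀ k : ℕ, ∃ z : EuclideanSpace ℝ (Fin n), ‖z‖ < 1/((k:ℝ)+1) ∧
      (volume.restrict (Ioc (0:ℝ) t)) {s | γ s + z ∈ N} = 0 := by
    intro k
    by_contra hcon
    push_neg at hcon
    have hsub : Metric.ball (0 : EuclideanSpace ℝ (Fin n)) (1/((k:ℝ)+1)) ⊆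
        {z | ¬ (volume.restrict (Ioc (0:ℝ) t)) {s | γ s + z ∈ N} = 0} := by
      intro z hzb
      exact hcon z (by simpa [dist_eq_norm] using hzb)
    have h0 := measure_mono_null hsub (ae_iff.1 hgood)
    have hpos := Metric.measure_ball_pos (volume) (0 : EuclideanSpace ℝ (Fin n))
      (by positivity : (0:ℝ) < 1/((k:ℝ)+1))
    exact hpos.ne' h0
  choose zs hzs1 hzs2 using hex
  have hztend : Tendsto zs atTop (nhds 0) := by
    apply squeeze_zero_norm (fun k => (hzs1 k).le)
    exact tendsto_one_div_add_atTop_nhds_zero_nat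
  -- pass to the limit in the inequality
  have hLHS : Tendsto (fun k => u (γ t + zs k) - u (γ 0 + zs k)) atTop
      (nhds (u (γ t) - u (γ 0))) := by
    have h1 : Tendsto (fun k => γ t + zs k) atTop (nhds (γ t)) := by
      simpa using tendsto_const_nhds.add hztend
    have h2 : Tendsto (fun k => γ 0 + zs k) atTop (nhds (γ 0)) := by
      simpa using tendsto_const_nhds.add hztend
    exact ((hK.continuous.tendsto _).comp h1).sub ((hK.continuous.tendsto _).comp h2)
  have hRHS : Tendsto (fun k => ∫ s in (0:ℝ)..t, (c + Lag H (γ s + zs k) (deriv γ s)))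
      atTop (nhds (∫ s in (0:ℝ)..t, (c + Lag H (γ s) (deriv γ s)))) := by
    -- uniform bound on the compact set Icc 0 t × closedBall 0 1
    have hψ : Continuous fun q : ℝ × EuclideanSpace ℝ (Fin n) =>
        c + Lag H (γ q.1 + q.2) (deriv γ q.1) := by
      apply continuous_const.add
      exact (lag_continuous hH).comp
        (((hγ.continuous.comp continuous_fst).add continuous_snd).prodMk
          ((hγ.continuous_deriv (by norm_num)).comp continuous_fst))
    obtain ⟨B, hB⟩ := (isCompact_Icc.prod
      (isCompact_closedBall (0 : EuclideanSpace ℝ (Fin n)) 1)).exists_bound_of_continuousOn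
      hψ.continuousOn
    apply intervalIntegral.tendsto_integral_filter_of_dominated_convergence (fun _ => B)
    · exact Eventually.of_forall fun k =>
        (integrand_cont hH c (hγ.continuous.add continuous_const)
          (hγ.continuous_deriv (by norm_num))).aestronglyMeasurable.restrict
    · refine Eventually.of_forall fun k => Eventually.of_forall fun s => fun hs => ?_
      have hsIcc : s ∈ Icc 0 t := by
        rw [uIoc_of_le ht.le] at hs
        exact Ioc_subset_Icc_self hs
      have hzk : zs k ∈ Metric.closedBall (0 : EuclideanSpace ℝ (Fin n)) 1 := by
        rw [Metric.mem_closedBall, dist_zero_right]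
        have : 1/((k:ℝ)+1) ≤ 1 := by
          rw [div_le_one (by positivity)]
          simp
        linarith [hzs1 k]
      exact hB (s, zs k) ⟨hsIcc, hzk⟩
    · exact intervalIntegrable_const
    · refine Eventually.of_forall fun s => fun _ => ?_
      have hcz : Continuous fun z : EuclideanSpace ℝ (Fin n) =>
          c + Lag H (γ s + z) (deriv γ s) := by
        apply continuous_const.add
        exact (lag_continuous hH).comp ((continuous_const.add continuous_id).prodMk
          continuous_const)
      have := (hcz.tendsto 0).comp hztend
      simpa [Function.comp_def] using this
  exact le_of_tendsto_of_tendsto' hLHS hRHS fun k => key (zs k) (hzs2 k)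

end AuxProofs

/-- A Lipschitz ℤⁿ-periodic function is a subsolution of `H(x,du_x) = c` if and only if
`u(y) - u(x) ≤ A_t(x,y)` for all `t > 0` and all `x, y`. -/
theorem isSubsolution_iff_action {n : ℕ} (H : EuclideanSpace ℝ (Fin n) × EuclideanSpace ℝ (Fin n) → ℝ) (hH : IsTonelli H) (c : ℝ)
    (u : EuclideanSpace ℝ (Fin n) → ℝ) (hLip : ∃ K, LipschitzWith K u) (hper : ZPeriodic u) :
    IsSubsolution H c u ↔ ∀ t > (0:ℝ), ∀ x y : EuclideanSpace ℝ (Fin n), u y - u x ≤ action H c t x y := by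
  constructor
  · rintro ⟨⟨K, hK⟩, hper, hae⟩ t ht x y
    refine le_csInf (action_nonempty hH c t ht x y) ?_
    rintro a ⟨γ, hγ, h0, hT, rfl⟩
    have h := subsolution_action_le hH hK hae ht hγ
    rwa [h0, hT] at h
  · intro hA
    exact subsolution_of_action_le hH hLip hper hA
end
end

section
/- Let H : ℝⁿ × ℝⁿ → ℝ be a Tonelli Hamiltonian admitting at least one critical subsolution. If u₁ and u₂ are two C¹ critical subsolutions, then ∇u₁(x) = ∇u₂(x) for every x in the projected Aubry set 𝒜(H). -/
open MeasureTheory Filter Set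
open scoped RealInnerProductSpace

noncomputable section

/-- Strict convexity along a line from positive second derivative data. -/
lemma line_strictConvex {n : ℕ} (f : EuclideanSpace ℝ (Fin n) → ℝ) (hf : ContDiff ℝ 2 f)
    (v : EuclideanSpace ℝ (Fin n))
    (hpos : ∀ z, 0 < iteratedFDeriv ℝ 2 f z (fun _ => v)) (a : EuclideanSpace ℝ (Fin n)) :
    StrictConvexOn ℝ Set.univ (fun t : ℝ => f (a + t • v)) := by
  set L : ℝ → EuclideanSpace ℝ (Fin n) := fun t => a + t • v with hLdef
  have hL : ∀ t : ℝ, HasDerivAt L v t := by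
    intro t
    have h1 : HasDerivAt (fun t : ℝ => t • v) ((1:ℝ) • v) t :=
      (hasDerivAt_id t).smul_const v
    have h2 := h1.const_add a
    rw [one_smul] at h2
    exact h2
  have hdf : Differentiable ℝ f := hf.differentiable (by norm_num)
  have hg' : ∀ t : ℝ, HasDerivAt (fun t => f (L t)) (fderiv ℝ f (L t) v) t := by
    intro t
    exact (hdf (L t)).hasFDerivAt.comp_hasDerivAt t (hL t)
  have hF1 : ContDiff ℝ 1 (fderiv ℝ f) := hf.fderiv_right le_rfl
  have hg'' : ∀ t : ℝ, HasDerivAt (fun t => fderiv ℝ f (L t) v)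
      (fderiv ℝ (fderiv ℝ f) (L t) v v) t := by
    intro t
    have h1 : HasDerivAt (fun t => fderiv ℝ f (L t)) (fderiv ℝ (fderiv ℝ f) (L t) v) t :=
      ((hF1.differentiable (by norm_num)) (L t)).hasFDerivAt.comp_hasDerivAt t (hL t)
    have h2 := h1.clm_apply (hasDerivAt_const t v)
    simpa using h2
  have hderiv : deriv (fun t => f (L t)) = fun t => fderiv ℝ f (L t) v :=
    funext fun t => (hg' t).deriv
  apply strictConvexOn_univ_of_deriv2_pos
  · exact hf.continuous.comp (by fun_prop)
  · intro t
    have : deriv^[2] (fun t => f (L t)) t = fderiv ℝ (fderiv ℝ f) (L t) v v := by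
      show deriv (deriv (fun t => f (L t))) t = _
      rw [hderiv]
      exact (hg'' t).deriv
    rw [this]
    have := hpos (L t)
    rwa [iteratedFDeriv_two_apply] at this

lemma midpoint_lt {n : ℕ} (H : EuclideanSpace ℝ (Fin n) × EuclideanSpace ℝ (Fin n) → ℝ)
    (hH : ContDiff ℝ 2 H)
    (hposdef : ∀ x p v, v ≠ 0 → 0 < iteratedFDeriv ℝ 2 (fun q => H (x, q)) p (fun _ => v))
    (y p q : EuclideanSpace ℝ (Fin n)) (hpq : p ≠ q) :
    H (y, (2⁻¹:ℝ) • (p + q)) < max (H (y, p)) (H (y, q)) := by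
  set f : EuclideanSpace ℝ (Fin n) → ℝ := fun r => H (y, r) with hfdef
  have hf : ContDiff ℝ 2 f := hH.comp (contDiff_const.prodMk contDiff_id)
  have hv : q - p ≠ 0 := sub_ne_zero.mpr (Ne.symm hpq)
  have hsc := line_strictConvex f hf (q - p) (fun z => hposdef y z (q - p) hv) p
  have hkey := hsc.2 (Set.mem_univ (0:ℝ)) (Set.mem_univ (1:ℝ))
    (by norm_num : (0:ℝ) ≠ 1) (by norm_num : (0:ℝ) < 2⁻¹) (by norm_num : (0:ℝ) < 2⁻¹)
    (by norm_num : (2⁻¹:ℝ) + 2⁻¹ = 1)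
  have e0 : p + (0:ℝ) • (q - p) = p := by simp
  have e1 : p + (1:ℝ) • (q - p) = q := by simp
  have emid : p + ((2⁻¹:ℝ) • (0:ℝ) + (2⁻¹:ℝ) • (1:ℝ)) • (q - p) = (2⁻¹:ℝ) • (p + q) := by
    have : ((2⁻¹:ℝ) • (0:ℝ) + (2⁻¹:ℝ) • (1:ℝ)) = (2⁻¹:ℝ) := by norm_num
    rw [this]
    rw [smul_sub, smul_add]
    module
  simp only [e0, e1, emid] at hkey
  calc H (y, (2⁻¹:ℝ) • (p + q)) < 2⁻¹ • f p + 2⁻¹ • f q := hkey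
    _ ≤ max (H (y, p)) (H (y, q)) := by
        have h1 : f p ≤ max (H (y,p)) (H (y,q)) := le_max_left _ _
        have h2 : f q ≤ max (H (y,p)) (H (y,q)) := le_max_right _ _
        simp only [smul_eq_mul]
        linarith

/-- Any two `C¹` critical subsolutions have the same differential on the projected
Aubry set. -/
theorem gradient_eq_on_aubry {n : ℕ} (H : EuclideanSpace ℝ (Fin n) × EuclideanSpace ℝ (Fin n) → ℝ) (hH : IsTonelli H)
    (hex : ∃ u, IsSubsolution H (mane H) u)
    (u₁ u₂ : EuclideanSpace ℝ (Fin n) → ℝ) (h₁ : IsC1CriticalSub H u₁) (h₂ : IsC1CriticalSub H u₂) :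
    ∀ x ∈ Aubry H, gradient u₁ x = gradient u₂ x := by
  intro x hx
  have hmid := midpoint_lt H hH.smooth hH.posdef
  have hd1 : Differentiable ℝ u₁ := h₁.1.differentiable (by norm_num)
  have hd2 : Differentiable ℝ u₂ := h₂.1.differentiable (by norm_num)
  set u : EuclideanSpace ℝ (Fin n) → ℝ := fun y => 2⁻¹ * (u₁ y + u₂ y) with hudef
  have hgrad : ∀ y, gradient u y = (2⁻¹:ℝ) • (gradient u₁ y + gradient u₂ y) := by
    intro y
    have hfd : fderiv ℝ u y = (2⁻¹:ℝ) • (fderiv ℝ u₁ y + fderiv ℝ u₂ y) :=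
      (((hd1 y).hasFDerivAt.add (hd2 y).hasFDerivAt).const_mul (2⁻¹:ℝ)).fderiv
    unfold gradient
    rw [hfd]
    simp only [_root_.map_smul, map_add]
  have hu : IsC1CriticalSub H u := by
    refine ⟨contDiff_const.mul (h₁.1.add h₂.1), ?_, ?_⟩
    · intro y k
      simp only [hudef]
      rw [h₁.2.1 y k, h₂.2.1 y k]
    · intro y
      rw [hgrad y]
      by_cases h : gradient u₁ y = gradient u₂ y
      · have he2 : (2⁻¹:ℝ) • (gradient u₁ y + gradient u₂ y) = gradient u₂ y := by
          rw [h]; module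
        rw [he2]; exact h₂.2.2 y
      · exact le_of_lt (lt_of_lt_of_le (hmid y _ _ h) (max_le (h₁.2.2 y) (h₂.2.2 y)))
  have he := hx u hu
  by_contra hne
  have hlt := hmid x _ _ hne
  rw [hx u₁ h₁, hx u₂ h₂, max_self] at hlt
  rw [hgrad x] at he
  rw [he] at hlt
  exact lt_irrefl _ hlt
end
end

section
/- Let H : ℝⁿ × ℝⁿ → ℝ be a Tonelli Hamiltonian admitting at least one critical subsolution. Then the projected Aubry set 𝒜(H) is non-empty. -/
open MeasureTheory Filter Set
open scoped RealInnerProductSpace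

noncomputable section

section AubryAux

open Metric

variable {n : ℕ}

/-- A `C²` function with everywhere nonnegative second derivative (in every direction)
is convex. -/
lemma convexOn_of_posdef2 {E : Type*} [NormedAddCommGroup E] [NormedSpace ℝ E]
    (f : E → ℝ) (hf : ContDiff ℝ 2 f)
    (hpos : ∀ p v, 0 ≤ iteratedFDeriv ℝ 2 f p (fun _ => v)) : ConvexOn ℝ univ f := by
  have hf1 : Differentiable ℝ f := hf.differentiable two_ne_zero
  have hf2 : Differentiable ℝ (fderiv ℝ f) := by
    have h := (contDiff_succ_iff_fderiv (n := 1)).mp (by norm_num at hf ⊢; exact hf)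
    exact h.2.2.differentiable one_ne_zero
  have key : ∀ p v : E, ConvexOn ℝ univ (fun t : ℝ => f (p + t • v)) := by
    intro p v
    have hφ : ∀ t : ℝ, HasDerivAt (fun s : ℝ => p + s • v) v t := by
      intro t
      simpa using ((hasDerivAt_id t).smul_const v).const_add p
    have hg' : ∀ t : ℝ, HasDerivAt (fun t : ℝ => f (p + t • v)) (fderiv ℝ f (p + t • v) v) t :=
      fun t => ((hf1 (p + t • v)).hasFDerivAt).comp_hasDerivAt t (hφ t)
    have hderivg : deriv (fun t : ℝ => f (p + t • v)) = fun t => fderiv ℝ f (p + t • v) v := by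
      funext t; exact (hg' t).deriv
    have hg'' : ∀ t : ℝ, HasDerivAt (fun s => fderiv ℝ f (p + s • v) v)
        (fderiv ℝ (fderiv ℝ f) (p + t • v) v v) t := by
      intro t
      have h2 : HasDerivAt (fun s : ℝ => fderiv ℝ f (p + s • v))
          (fderiv ℝ (fderiv ℝ f) (p + t • v) v) t :=
        ((hf2 (p + t • v)).hasFDerivAt).comp_hasDerivAt t (hφ t)
      simpa using h2.clm_apply (hasDerivAt_const t v)
    refine convexOn_of_deriv2_nonneg convex_univ
      (Continuous.continuousOn (by fun_prop))
      (fun t _ => (hg' t).differentiableAt.differentiableWithinAt)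
      (by rw [hderivg]; exact fun t _ => (hg'' t).differentiableAt.differentiableWithinAt) ?_
    intro t _
    have h3 : deriv^[2] (fun t : ℝ => f (p + t • v)) t
        = fderiv ℝ (fderiv ℝ f) (p + t • v) v v := by
      simp only [Function.iterate_succ, Function.iterate_zero, Function.comp_apply, id]
      rw [hderivg]
      exact (hg'' t).deriv
    rw [h3]
    have h4 := hpos (p + t • v) v
    rwa [iteratedFDeriv_two_apply] at h4
  refine ⟨convex_univ, ?_⟩
  intro p _ q _ a b ha hb hab
  have h := (key p (q - p)).2 (mem_univ (0:ℝ)) (mem_univ (1:ℝ)) ha hb hab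
  simp only [smul_eq_mul, mul_zero, mul_one, zero_add, zero_smul, add_zero, one_smul] at h
  have e1 : p + b • (q - p) = a • p + b • q := by
    have : a = 1 - b := by linarith
    rw [this]; module
  have e2 : p + (q - p) = q := by abel
  rw [e1, e2] at h
  simpa using h

/-- A continuous function on `E × E`, convex and superlinear in the second variable,
is bounded below on `K × E` for every compact `K`. -/
lemma bddBelow_on_compact {E : Type*} [NormedAddCommGroup E] [InnerProductSpace ℝ E]
    [FiniteDimensional ℝ E] (H : E × E → ℝ) (hc : Continuous H)
    (hconv : ∀ x : E, ConvexOn ℝ univ (fun p => H (x, p)))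
    (hsl : ∀ x : E, Tendsto (fun p : E => H (x, p) / ‖p‖) (comap (‖·‖) atTop) atTop)
    {K : Set E} (hK : IsCompact K) :
    ∃ m : ℝ, ∀ x ∈ K, ∀ p, m ≤ H (x, p) := by
  by_contra hcon
  push_neg at hcon
  choose xs hxs ps hps using fun k : ℕ => hcon (-(k:ℝ))
  have lower : ∀ B : ℝ, ∃ m, ∀ x ∈ K, ∀ p ∈ closedBall (0:E) B, m ≤ H (x, p) := by
    intro B
    obtain ⟨m, hm⟩ := ((hK.prod (isCompact_closedBall (0:E) B)).bddBelow_image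
      hc.continuousOn)
    exact ⟨m, fun x hx p hp => hm ⟨(x, p), ⟨hx, hp⟩, rfl⟩⟩
  have hnorm : Tendsto (fun k : ℕ => ‖ps k‖) atTop atTop := by
    rw [Filter.tendsto_atTop]
    intro B
    by_contra hB
    rw [not_eventually] at hB
    obtain ⟨m2, hm2⟩ := lower (max B 0)
    obtain ⟨k, hk1, hk2⟩ := ((eventually_ge_atTop (⌈-m2⌉₊ + 1)).and_frequently hB).exists
    push_neg at hk2
    have h1 : m2 ≤ H (xs k, ps k) := hm2 _ (hxs k) _ (by
      simp only [mem_closedBall, dist_zero_right]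
      exact le_trans hk2.le (le_max_left _ _))
    have h2 : H (xs k, ps k) < -(k:ℝ) := hps k
    have h3 : (-m2 : ℝ) ≤ ⌈-m2⌉₊ := Nat.le_ceil _
    have h4 : ((⌈-m2⌉₊ + 1 : ℕ) : ℝ) ≤ (k:ℝ) := by exact_mod_cast hk1
    push_cast at h4
    linarith
  set q : ℕ → E := fun k => ‖ps k‖⁻¹ • ps k with hq
  have hqball : ∀ k, q k ∈ closedBall (0:E) 1 := by
    intro k
    simp only [hq, mem_closedBall, dist_zero_right, norm_smul, norm_inv, norm_norm]
    rcases eq_or_ne (ps k) 0 with h | h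
    · simp [h]
    · rw [inv_mul_cancel₀ (norm_ne_zero_iff.mpr h)]
  obtain ⟨⟨xstar, e⟩, hmem, φ, hφ, hconvg⟩ :=
    (hK.prod (isCompact_closedBall (0:E) 1)).tendsto_subseq
      (x := fun k => (xs k, q k)) (fun k => ⟨hxs k, hqball k⟩)
  have hφtop : Tendsto φ atTop atTop := hφ.tendsto_atTop
  have hx1 : Tendsto (fun j => xs (φ j)) atTop (nhds xstar) :=
    (continuous_fst.tendsto _).comp hconvg
  have hq1 : Tendsto (fun j => q (φ j)) atTop (nhds e) :=
    (continuous_snd.tendsto _).comp hconvg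
  have hne : ‖e‖ = 1 := by
    have h1 : Tendsto (fun j => ‖q (φ j)‖) atTop (nhds ‖e‖) := hq1.norm
    have h2 : ∀ᶠ j in atTop, ‖q (φ j)‖ = 1 := by
      filter_upwards [hφtop.eventually (hnorm.eventually_ge_atTop 1)] with j hj
      have hne0 : ps (φ j) ≠ 0 := by
        intro h0; rw [h0, norm_zero] at hj; linarith
      simp only [hq, norm_smul, norm_inv, norm_norm]
      rw [inv_mul_cancel₀ (norm_ne_zero_iff.mpr hne0)]
    exact tendsto_nhds_unique (h1.congr' h2) tendsto_const_nhds
  obtain ⟨C0, hC0⟩ : ∃ C0, ∀ x ∈ K, ∀ p ∈ closedBall (0:E) 1, H (x, p) ≤ C0 := by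
    obtain ⟨m, hm⟩ := ((hK.prod (isCompact_closedBall (0:E) 1)).bddAbove_image
      hc.continuousOn)
    exact ⟨m, fun x hx p hp => hm ⟨(x, p), ⟨hx, hp⟩, rfl⟩⟩
  set C : ℝ := max C0 0 with hC
  have hkey : ∀ R : ℝ, 1 ≤ R → H (xstar, R • e) ≤ C := by
    intro R hR
    have hev : ∀ᶠ j in atTop, H (xs (φ j), R • q (φ j)) ≤ C := by
      filter_upwards [hφtop.eventually (hnorm.eventually_ge_atTop (max R 1))] with j hj
      set k := φ j
      have hpk : (max R 1) ≤ ‖ps k‖ := hj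
      have hpk1 : (1:ℝ) ≤ ‖ps k‖ := le_trans (le_max_right _ _) hpk
      have hpkR : R ≤ ‖ps k‖ := le_trans (le_max_left _ _) hpk
      have hpos : (0:ℝ) < ‖ps k‖ := by linarith
      have hseg : R • q k ∈ segment ℝ (0:E) (ps k) := by
        refine ⟨1 - R * ‖ps k‖⁻¹, R * ‖ps k‖⁻¹, ?_, ?_, by ring, ?_⟩
        · have : R * ‖ps k‖⁻¹ ≤ 1 := by
            rw [mul_inv_le_iff₀ hpos]; simpa using hpkR
          linarith
        · positivity
        · simp only [smul_zero, zero_add, hq, smul_smul]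
      have hle := (hconv (xs k)).le_on_segment (mem_univ (0:E)) (mem_univ (ps k)) hseg
      have h0 : H (xs k, (0:E)) ≤ C0 := hC0 _ (hxs k) _ (by simp)
      have h1 : H (xs k, ps k) < 0 :=
        lt_of_lt_of_le (hps k) (neg_nonpos.mpr (Nat.cast_nonneg k))
      calc H (xs k, R • q k) ≤ max (H (xs k, 0)) (H (xs k, ps k)) := hle
        _ ≤ C := max_le (le_trans h0 (le_max_left _ _)) (le_trans h1.le (le_max_right _ _))
    have hlim : Tendsto (fun j => H (xs (φ j), R • q (φ j))) atTop
        (nhds (H (xstar, R • e))) :=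
      (hc.tendsto _).comp (hx1.prodMk_nhds (hq1.const_smul R))
    exact le_of_tendsto hlim hev
  have hmem2 : {p : E | C + 1 ≤ H (xstar, p) / ‖p‖} ∈ comap (‖·‖) atTop :=
    hsl xstar (eventually_ge_atTop (C+1))
  obtain ⟨s, hs, hsub⟩ := mem_comap.mp hmem2
  obtain ⟨r, hr⟩ := mem_atTop_sets.mp hs
  set R : ℝ := max r 1 with hR
  have hR1 : 1 ≤ R := le_max_right _ _
  have hnR : ‖R • e‖ = R := by
    rw [norm_smul, hne, mul_one, Real.norm_eq_abs, abs_of_pos (by linarith)]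
  have hin : R • e ∈ {p : E | C + 1 ≤ H (xstar, p) / ‖p‖} := by
    apply hsub
    simp only [mem_preimage, hnR]
    exact hr _ (le_max_left _ _)
  have h7 : C + 1 ≤ H (xstar, R • e) / R := by rwa [mem_setOf_eq, hnR] at hin
  have hCpos : (0:ℝ) ≤ C := le_max_right _ _
  have h5 : (C + 1) * R ≤ H (xstar, R • e) := by
    rw [← le_div_iff₀ (by linarith)]
    exact h7
  have h6 : H (xstar, R • e) ≤ C := hkey R hR1
  nlinarith

lemma coord_add' (x : EuclideanSpace ℝ (Fin n)) (c : Fin n → ℝ) (i : Fin n) :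
    (x + (EuclideanSpace.equiv (Fin n) ℝ).symm c) i = x i + c i := rfl

lemma cube_compact' : IsCompact {y : EuclideanSpace ℝ (Fin n) | ∀ i, y i ∈ Icc (0:ℝ) 1} := by
  have h1 : IsCompact (Icc (0 : Fin n → ℝ) 1) := isCompact_Icc
  have h2 := h1.image (EuclideanSpace.equiv (Fin n) ℝ).symm.continuous
  convert h2 using 1
  ext y
  constructor
  · intro hy
    exact ⟨(EuclideanSpace.equiv (Fin n) ℝ) y,
      ⟨fun i => (hy i).1, fun i => (hy i).2⟩, by simp⟩
  · rintro ⟨z, hz, rfl⟩ i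
    exact ⟨hz.1 i, hz.2 i⟩

lemma frac_mem' (x : EuclideanSpace ℝ (Fin n)) :
    ∃ k : Fin n → ℤ, ∀ i,
      (x + (EuclideanSpace.equiv (Fin n) ℝ).symm (fun i => (k i : ℝ))) i ∈ Icc (0:ℝ) 1 := by
  refine ⟨fun i => -⌊x i⌋, fun i => ?_⟩
  rw [coord_add']
  push_cast
  constructor
  · linarith [Int.floor_le (x i)]
  · linarith [Int.lt_floor_add_one (x i)]

lemma gradient_eq_fderiv' {u : EuclideanSpace ℝ (Fin n) → ℝ} {x : EuclideanSpace ℝ (Fin n)}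
    (hu : DifferentiableAt ℝ u x) :
    gradient u x = (InnerProductSpace.toDual ℝ (EuclideanSpace ℝ (Fin n))).symm (fderiv ℝ u x) :=
  (hu.hasFDerivAt.hasGradientAt).gradient

lemma fderiv_periodic' {w : EuclideanSpace ℝ (Fin n) → ℝ} (hw : Differentiable ℝ w)
    (hper : ZPeriodic w) (x : EuclideanSpace ℝ (Fin n)) (k : Fin n → ℤ) :
    fderiv ℝ w (x + (EuclideanSpace.equiv (Fin n) ℝ).symm (fun i => (k i : ℝ))) = fderiv ℝ w x := by
  set v := (EuclideanSpace.equiv (Fin n) ℝ).symm (fun i => (k i : ℝ)) with hv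
  have hT : HasFDerivAt (fun z : EuclideanSpace ℝ (Fin n) => z + v)
      (ContinuousLinearMap.id ℝ _) x := (hasFDerivAt_id x).add_const v
  have hcomp : HasFDerivAt (fun z => w (z + v)) (fderiv ℝ w (x + v)) x := by
    have := ((hw (x + v)).hasFDerivAt).comp x hT
    simpa [Function.comp_def] using this
  have heq : (fun z => w (z + v)) = w := funext fun z => hper z k
  rw [heq] at hcomp
  exact hcomp.fderiv.symm

end AubryAux

/-- The projected Aubry set is not empty. -/
theorem aubry_nonempty {n : ℕ} (H : EuclideanSpace ℝ (Fin n) × EuclideanSpace ℝ (Fin n) → ℝ) (hH : IsTonelli H)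
    (hex : ∃ u, IsSubsolution H (mane H) u) : (Aubry H).Nonempty := by
  classical
  set c := mane H with hcdef
  -- fiber convexity
  have hfc : ∀ x : (EuclideanSpace ℝ (Fin n)), ConvexOn ℝ Set.univ (fun p => H (x, p)) := by
    intro x
    refine convexOn_of_posdef2 _ (by have := hH.smooth; fun_prop) ?_
    intro p v
    rcases eq_or_ne v 0 with rfl | hv
    · rw [(iteratedFDeriv ℝ 2 _ p).map_coord_zero (0 : Fin 2) rfl]
    · exact (hH.posdef x p v hv).le
  have hHc : Continuous H := hH.smooth.continuous
  obtain ⟨m, hm⟩ := bddBelow_on_compact H hHc hfc hH.superlinear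
    (isCompact_closedBall (0 : (EuclideanSpace ℝ (Fin n))) 1)
  -- the set of subsolution levels is bounded below
  have hSbdd : BddBelow {c | ∃ u, IsSubsolution H c u} := by
    refine ⟨m, fun c' hc' => ?_⟩
    obtain ⟨u, _, _, hae⟩ := hc'
    obtain ⟨x₀, hx₀b, hx₀⟩ : ∃ x₀ ∈ Metric.ball (0:(EuclideanSpace ℝ (Fin n))) 1,
        DifferentiableAt ℝ u x₀ ∧ H (x₀, gradient u x₀) ≤ c' := by
      by_contra hno
      push_neg at hno
      have hsub : Metric.ball (0:(EuclideanSpace ℝ (Fin n))) 1 ⊆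
          {x | ¬(DifferentiableAt ℝ u x ∧ H (x, gradient u x) ≤ c')} := by
        intro x hx hcc
        exact absurd hcc.2 (not_le.mpr (hno x hx hcc.1))
      have h0 := measure_mono_null hsub (ae_iff.mp hae)
      exact absurd h0 (ne_of_gt (Metric.measure_ball_pos _ _ one_pos))
    exact le_trans (hm x₀ (Metric.ball_subset_closedBall hx₀b) _) hx₀.2
  by_contra hA
  rw [Set.not_nonempty_iff_eq_empty] at hA
  have hstrict : ∀ z : (EuclideanSpace ℝ (Fin n)), ∃ u, IsC1CriticalSub H u ∧ H (z, gradient u z) < c := by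
    intro z
    have hz : z ∉ Aubry H := by rw [hA]; exact notMem_empty z
    simp only [Aubry, mem_setOf_eq, not_forall] at hz
    obtain ⟨u, hu, hne⟩ := hz
    exact ⟨u, hu, lt_of_le_of_ne (hu.2.2 z) hne⟩
  choose uu huu hlt using hstrict
  have hgradcont : ∀ u : (EuclideanSpace ℝ (Fin n)) → ℝ, ContDiff ℝ 1 u → Continuous (fun x => gradient u x) := by
    intro u hu
    have h1 : Continuous (fderiv ℝ u) := hu.continuous_fderiv one_ne_zero
    have h2 : (fun x => gradient u x)
        = fun x => (InnerProductSpace.toDual ℝ (EuclideanSpace ℝ (Fin n))).symm (fderiv ℝ u x) := by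
      funext x; exact gradient_eq_fderiv' ((hu.differentiable one_ne_zero) x)
    rw [h2]
    exact (InnerProductSpace.toDual ℝ (EuclideanSpace ℝ (Fin n))).symm.continuous.comp h1
  have hφcont : ∀ z : (EuclideanSpace ℝ (Fin n)), Continuous (fun x => H (x, gradient (uu z) x)) := fun z =>
    hHc.comp (continuous_id.prodMk (hgradcont _ (huu z).1))
  set K := {y : (EuclideanSpace ℝ (Fin n)) | ∀ i, y i ∈ Icc (0:ℝ) 1} with hKdef
  have hK : IsCompact K := cube_compact'
  have hKne : K.Nonempty := ⟨0, fun i => ⟨le_rfl, zero_le_one⟩⟩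
  have hcover : K ⊆ ⋃ z : (EuclideanSpace ℝ (Fin n)), {x | H (x, gradient (uu z) x) < c} :=
    fun x _ => mem_iUnion.mpr ⟨x, hlt x⟩
  obtain ⟨t, ht⟩ := hK.elim_finite_subcover
    (fun z : (EuclideanSpace ℝ (Fin n)) => {x | H (x, gradient (uu z) x) < c})
    (fun z => isOpen_lt (hφcont z) continuous_const) hcover
  have htne : t.Nonempty := by
    rcases hKne with ⟨y, hy⟩
    have := ht hy
    rw [mem_iUnion₂] at this
    obtain ⟨z, hz, _⟩ := this
    exact ⟨z, hz⟩
  set N := t.card with hNdef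
  have hNpos : 0 < (N:ℝ) := by
    have := Finset.card_pos.mpr htne
    exact_mod_cast this
  set w : (EuclideanSpace ℝ (Fin n)) → ℝ := fun x => (N:ℝ)⁻¹ * ∑ z ∈ t, uu z x with hwdef
  have hwC1 : ContDiff ℝ 1 w :=
    contDiff_const.mul (ContDiff.sum fun z _ => (huu z).1)
  have hwdiff : Differentiable ℝ w := hwC1.differentiable one_ne_zero
  have hwper : ZPeriodic w := by
    intro x k
    simp only [hwdef]
    congr 1
    exact Finset.sum_congr rfl fun z _ => (huu z).2.1 x k
  have hdz : ∀ x : (EuclideanSpace ℝ (Fin n)), ∀ z ∈ t, DifferentiableAt ℝ (uu z) x :=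
    fun x z _ => ((huu z).1.differentiable one_ne_zero) x
  have hgw : ∀ x : (EuclideanSpace ℝ (Fin n)), gradient w x = (N:ℝ)⁻¹ • ∑ z ∈ t, gradient (uu z) x := by
    intro x
    have hsum : fderiv ℝ (fun x => ∑ z ∈ t, uu z x) x = ∑ z ∈ t, fderiv ℝ (uu z) x := by
      rw [fderiv_fun_sum (hdz x)]
    have h1 : fderiv ℝ w x = (N:ℝ)⁻¹ • ∑ z ∈ t, fderiv ℝ (uu z) x := by
      rw [hwdef]
      rw [fderiv_const_mul (DifferentiableAt.fun_sum (hdz x))]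
      rw [hsum]
    rw [gradient_eq_fderiv' (hwdiff x), h1, _root_.map_smul, map_sum]
    exact congrArg _ (Finset.sum_congr rfl fun z hz => (gradient_eq_fderiv' (hdz x z hz)).symm)
  have hwK : ∀ x ∈ K, H (x, gradient w x) < c := by
    intro x hx
    have hxcov := ht hx
    rw [mem_iUnion₂] at hxcov
    obtain ⟨z₀, hz₀t, hz₀⟩ := hxcov
    have hsum1 : ∑ _z ∈ t, (N:ℝ)⁻¹ = 1 := by
      rw [Finset.sum_const, nsmul_eq_mul, ← hNdef, mul_inv_cancel₀ (ne_of_gt hNpos)]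
    have hconv := (hfc x).map_sum_le (t := t) (w := fun _ => (N:ℝ)⁻¹)
      (p := fun z => gradient (uu z) x)
      (fun z _ => by positivity) hsum1 (fun z _ => mem_univ _)
    have heq : ∑ z ∈ t, (N:ℝ)⁻¹ • gradient (uu z) x
        = (N:ℝ)⁻¹ • ∑ z ∈ t, gradient (uu z) x := by
      rw [Finset.smul_sum]
    rw [heq, ← hgw x] at hconv
    refine lt_of_le_of_lt hconv ?_
    have hlt2 : ∑ z ∈ t, (N:ℝ)⁻¹ • H (x, gradient (uu z) x)
        < ∑ _z ∈ t, (N:ℝ)⁻¹ * c := by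
      apply Finset.sum_lt_sum
      · intro z hz
        have := (huu z).2.2 x
        simp only [smul_eq_mul]
        have hNinv : (0:ℝ) < (N:ℝ)⁻¹ := by positivity
        nlinarith
      · refine ⟨z₀, hz₀t, ?_⟩
        simp only [smul_eq_mul]
        have hNinv : (0:ℝ) < (N:ℝ)⁻¹ := by positivity
        have : H (x, gradient (uu z₀) x) < c := hz₀
        nlinarith
    calc ∑ z ∈ t, (N:ℝ)⁻¹ • H (x, gradient (uu z) x)
        < ∑ _z ∈ t, (N:ℝ)⁻¹ * c := hlt2
      _ = (∑ _z ∈ t, (N:ℝ)⁻¹) * c := by rw [Finset.sum_mul]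
      _ = c := by rw [hsum1, one_mul]
  obtain ⟨x₁, hx₁K, hx₁max'⟩ := hK.exists_isMaxOn hKne
    (Continuous.continuousOn (hHc.comp (continuous_id.prodMk (hgradcont w hwC1))))
  have hx₁max := isMaxOn_iff.mp hx₁max'
  set c' := H (x₁, gradient w x₁) with hc'def
  have hc'c : c' < c := hwK x₁ hx₁K
  have hglobal : ∀ x : (EuclideanSpace ℝ (Fin n)), H (x, gradient w x) ≤ c' := by
    intro x
    obtain ⟨k, hk⟩ := frac_mem' x
    set v := (EuclideanSpace.equiv (Fin n) ℝ).symm (fun i => ((k i : ℝ))) with hv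
    have hyK : x + v ∈ K := fun i => hk i
    have hgper : gradient w (x + v) = gradient w x := by
      rw [gradient_eq_fderiv' (hwdiff (x + v)), gradient_eq_fderiv' (hwdiff x),
        fderiv_periodic' hwdiff hwper x k]
    have hHeq : H (x, gradient w x) = H (x + v, gradient w (x + v)) := by
      rw [hgper]
      exact (hH.periodic x _ k).symm
    rw [hHeq]
    exact hx₁max _ hyK
  obtain ⟨M, hM⟩ : ∃ M, ∀ y ∈ K, ‖fderiv ℝ w y‖ ≤ M := by
    obtain ⟨M, hM⟩ := hK.bddAbove_image ((hwC1.continuous_fderiv one_ne_zero).norm).continuousOn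
    exact ⟨M, fun y hy => hM ⟨y, hy, rfl⟩⟩
  have hMall : ∀ x : (EuclideanSpace ℝ (Fin n)), ‖fderiv ℝ w x‖ ≤ max M 0 := by
    intro x
    obtain ⟨k, hk⟩ := frac_mem' x
    have hyK : x + (EuclideanSpace.equiv (Fin n) ℝ).symm (fun i => ((k i : ℝ))) ∈ K :=
      fun i => hk i
    calc ‖fderiv ℝ w x‖
        = ‖fderiv ℝ w (x + (EuclideanSpace.equiv (Fin n) ℝ).symm (fun i => ((k i : ℝ))))‖ := by
          rw [fderiv_periodic' hwdiff hwper x k]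
      _ ≤ M := hM _ hyK
      _ ≤ max M 0 := le_max_left _ _
  have hlip : LipschitzWith (Real.toNNReal (max M 0)) w := by
    apply lipschitzWith_of_nnnorm_fderiv_le hwdiff
    intro x
    rw [← NNReal.coe_le_coe, coe_nnnorm, Real.coe_toNNReal _ (le_max_right M 0)]
    exact hMall x
  have hsub2 : IsSubsolution H c' w :=
    ⟨⟨_, hlip⟩, hwper, Filter.Eventually.of_forall fun x => ⟨hwdiff x, hglobal x⟩⟩
  have hle : mane H ≤ c' := csInf_le hSbdd ⟨w, hsub2⟩
  rw [← hcdef] at hle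
  linarith
end
end

section
/- A function f : ℝ^d → ℝ is differentiable everywhere with Lipschitz gradient (i.e. C^{1,1}) if and only if it is both semi-concave and semi-convex, i.e. there exists K > 0 such that x ↦ f(x) − K‖x‖² is concave on ℝ^d and x ↦ f(x) + K‖x‖² is convex on ℝ^d. -/
/-!
Both sides are equivalent to a uniform two-sided quadratic Taylor bound
`|f y - f x - ⟪G x, y - x⟫| ≤ K ‖y - x‖²`. A Lipschitz gradient gives it by the mean value
theorem, and it places `f + K‖·‖²` above its tangent hyperplanes and `f - K‖·‖²` below them.
Conversely, Hahn–Banach gives subgradients `φ` of `f + K‖·‖²` and `ψ` of `K‖·‖² - f` at `x`;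
`φ + ψ` then supports the smooth function `2K‖·‖²`, so it is its derivative, and this squeezes
`f` between two quadratics with a common tangent at `x`. The bound makes `f` differentiable with
gradient `G`, and comparing it at the three points `x`, `y`, `y + u` with `‖u‖ = ‖y - x‖`
shows that `G` is `6K`-Lipschitz.
-/

open Set InnerProductSpace Asymptotics Filter
open scoped NNReal

section Normed

variable {𝕜 E F : Type*} [NontriviallyNormedField 𝕜] [NormedAddCommGroup E] [NormedSpace 𝕜 E]
  [NormedAddCommGroup F] [NormedSpace 𝕜 F]

theorem hasFDerivAt_of_norm_sub_le_mul_norm_sq {f : E → F} {f' : E →L[𝕜] F} {x : E} {C : ℝ}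
    (h : ∀ v, ‖f (x + v) - f x - f' v‖ ≤ C * ‖v‖ ^ 2) : HasFDerivAt f f' x := by
  rw [hasFDerivAt_iff_isLittleO_nhds_zero]
  refine (IsBigO.of_bound C (Eventually.of_forall fun v => ?_)).trans_isLittleO
    (isLittleO_norm_pow_id one_lt_two)
  simpa using h v

end Normed

section RealNormed

variable {E : Type*} [NormedAddCommGroup E] [NormedSpace ℝ E]

theorem ContinuousLinearMap.eq_zero_of_le_mul_norm_sq {ℓ : E →L[ℝ] ℝ} {C : ℝ}
    (h : ∀ v, ℓ v ≤ C * ‖v‖ ^ 2) : ℓ = 0 := by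
  refine ℓ.hasFDerivAt.unique
    (hasFDerivAt_of_norm_sub_le_mul_norm_sq (x := 0) (C := C) fun v => ?_)
  have := h (-v)
  rw [map_neg, norm_neg] at this
  simpa [abs_le] using ⟨by linarith, h v⟩

theorem ConvexOn.exists_subgradient {h : E → ℝ} (hconv : ConvexOn ℝ univ h)
    (hcont : Continuous h) (x : E) : ∃ φ : E →L[ℝ] ℝ, ∀ y, h x + φ (y - x) ≤ h y := by
  have hopen : IsOpen {p : E × ℝ | p.1 ∈ univ ∧ h p.1 < p.2} := by
    simpa using isOpen_lt (hcont.comp continuous_fst) continuous_snd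
  obtain ⟨ℓ, hℓ⟩ := geometric_hahn_banach_open_point hconv.convex_strict_epigraph hopen
    (by simp : (x, h x) ∉ _)
  set φ := ℓ.comp (.inl ℝ E ℝ)
  set c := ℓ (0, 1)
  have hsplit (y : E) (t : ℝ) : ℓ (y, t) = φ y + t * c := by
    rw [show (y, t) = (y, 0) + t • ((0 : E), (1 : ℝ)) by simp, map_add, map_smul, smul_eq_mul]
    rfl
  have hc : c < 0 := by
    have := hℓ (x, h x + 1) (by simp)
    rw [hsplit, hsplit] at this
    linarith
  have hsupport (y : E) : φ y + h y * c ≤ φ x + h x * c := by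
    refine le_of_forall_pos_lt_add fun ε hε => ?_
    have := hℓ (y, h y + ε / -c) (by simpa using div_pos hε (neg_pos.2 hc))
    rw [hsplit, hsplit, add_mul, div_mul_eq_mul_div, div_neg, mul_div_assoc, div_self hc.ne] at this
    linarith
  refine ⟨(-c)⁻¹ • φ, fun y => ?_⟩
  have : (-c)⁻¹ * (φ y - φ x) ≤ h y - h x := by
    rw [inv_mul_le_iff₀ (neg_pos.2 hc)]
    linarith [hsupport y]
  change h x + (-c)⁻¹ * φ (y - x) ≤ h y
  rw [map_sub]
  linarith

end RealNormed

theorem convexOn_univ_of_forall_add_le {E : Type*} [AddCommGroup E] [Module ℝ E] {g : E → ℝ}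
    (D : E → E →ₗ[ℝ] ℝ) (h : ∀ x y, g x + D x (y - x) ≤ g y) : ConvexOn ℝ univ g := by
  refine ⟨convex_univ, fun x _ y _ a b ha hb hab => ?_⟩
  set z := a • x + b • y
  have hx := mul_le_mul_of_nonneg_left (h z x) ha
  have hy := mul_le_mul_of_nonneg_left (h z y) hb
  have hcancel : a * D z (x - z) + b * D z (y - z) = 0 := by
    have : a • (x - z) + b • (y - z) = z - (a + b) • z := by simp only [z]; module
    rw [← smul_eq_mul, ← smul_eq_mul, ← map_smul, ← map_smul, ← map_add, this, hab, one_smul,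
      sub_self, map_zero]
  rw [mul_add] at hx hy
  simp only [smul_eq_mul]
  linear_combination hx + hy - hcancel - g z * hab

section InnerProduct

variable {E : Type*} [NormedAddCommGroup E] [InnerProductSpace ℝ E]

def HasQuadraticTaylorBound (f : E → ℝ) (G : E → E) (K : ℝ) : Prop :=
  ∀ x y, |f y - f x - ⟪G x, y - x⟫_ℝ| ≤ K * ‖y - x‖ ^ 2

variable {f : E → ℝ} {G : E → E} {K : ℝ}

namespace HasQuadraticTaylorBound

theorem mono (h : HasQuadraticTaylorBound f G K) {K' : ℝ} (hK : K ≤ K') :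
    HasQuadraticTaylorBound f G K' :=
  fun x y => (h x y).trans (by gcongr)

theorem neg (h : HasQuadraticTaylorBound f G K) :
    HasQuadraticTaylorBound (fun x => -f x) (fun x => -G x) K := by
  intro x y
  rw [inner_neg_left, ← abs_neg]
  convert h x y using 2
  ring

theorem convexOn_add (h : HasQuadraticTaylorBound f G K) :
    ConvexOn ℝ univ (fun x => f x + K * ‖x‖ ^ 2) := by
  refine convexOn_univ_of_forall_add_le (fun x => innerₛₗ ℝ (G x + (2 * K) • x)) fun x y => ?_
  have hf := (abs_le.1 (h x y)).1
  have hsq := norm_add_sq_real x (y - x)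
  rw [add_sub_cancel] at hsq
  rw [innerₛₗ_apply_apply, inner_add_left, real_inner_smul_left, hsq]
  linarith

theorem concaveOn_sub (h : HasQuadraticTaylorBound f G K) :
    ConcaveOn ℝ univ (fun x => f x - K * ‖x‖ ^ 2) := by
  have hneg : (fun x => f x - K * ‖x‖ ^ 2) = -fun x => -f x + K * ‖x‖ ^ 2 := by
    ext x
    simp only [Pi.neg_apply]
    ring
  exact hneg ▸ h.neg.convexOn_add.neg

theorem hasGradientAt [CompleteSpace E] (h : HasQuadraticTaylorBound f G K) (x : E) :
    HasGradientAt f (G x) x := by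
  refine hasGradientAt_iff_hasFDerivAt.2
    (hasFDerivAt_of_norm_sub_le_mul_norm_sq (C := K) fun v => ?_)
  simpa [toDual_apply_apply] using h x (x + v)

theorem inner_sub_le (h : HasQuadraticTaylorBound f G K) (x y u : E) :
    ⟪G y - G x, u⟫_ℝ ≤ K * (‖y - x + u‖ ^ 2 + ‖u‖ ^ 2 + ‖y - x‖ ^ 2) := by
  have h₁ := (abs_le.1 (h x (x + (y - x + u)))).2
  have h₂ := (abs_le.1 (h y (x + (y - x + u)))).1
  have h₃ := (abs_le.1 (h x y)).1
  rw [add_sub_cancel_left, inner_add_right] at h₁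
  rw [show x + (y - x + u) - y = u by abel] at h₂
  rw [inner_sub_left]
  linarith

theorem lipschitzWith (h : HasQuadraticTaylorBound f G K) (hK : 0 ≤ K) :
    LipschitzWith (6 * K).toNNReal G := by
  refine LipschitzWith.of_dist_le' fun x y => ?_
  rcases eq_or_ne x y with rfl | hxy
  · simp
  rw [dist_comm, dist_comm x, dist_eq_norm, dist_eq_norm]
  set r := ‖y - x‖
  set w := G y - G x
  rcases eq_or_ne w 0 with hw | hw
  · rw [hw, norm_zero]
    positivity
  have hr : 0 < r := norm_pos_iff.2 (sub_ne_zero.2 hxy.symm)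
  have hw' : 0 < ‖w‖ := norm_pos_iff.2 hw
  set u := (r / ‖w‖) • w
  have hu : ‖u‖ = r := by
    rw [norm_smul, Real.norm_of_nonneg (by positivity), div_mul_cancel₀ _ hw'.ne']
  have hwu : ⟪w, u⟫_ℝ = ‖w‖ * r := by
    rw [real_inner_smul_right, real_inner_self_eq_norm_sq]
    field_simp
  have hyxu : ‖y - x + u‖ ^ 2 ≤ (2 * r) ^ 2 := by
    gcongr
    exact (norm_add_le _ _).trans (by rw [hu]; linarith)
  have := h.inner_sub_le x y u
  rw [hwu, hu] at this
  nlinarith [mul_le_mul_of_nonneg_left hyxu hK]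

end HasQuadraticTaylorBound

theorem hasQuadraticTaylorBound_of_lipschitzWith [CompleteSpace E] {L : ℝ≥0}
    (hf : ∀ x, HasGradientAt f (G x) x) (hG : LipschitzWith L G) :
    HasQuadraticTaylorBound f G L := by
  intro x y
  set r := ‖y - x‖
  have hderiv : ∀ z ∈ Metric.closedBall x r, HasFDerivWithinAt (fun z => f z - ⟪G x, z⟫_ℝ)
      (toDual ℝ E (G z - G x)) (Metric.closedBall x r) z := by
    intro z _
    rw [map_sub]
    exact ((hf z).hasFDerivAt.sub (toDual ℝ E (G x)).hasFDerivAt).hasFDerivWithinAt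
  have hbound : ∀ z ∈ Metric.closedBall x r, ‖toDual ℝ E (G z - G x)‖ ≤ L * r := by
    intro z hz
    rw [LinearIsometryEquiv.norm_map, ← dist_eq_norm]
    exact (hG.dist_le_mul z x).trans (by gcongr; exact hz)
  have hmvt := (convex_closedBall x r).norm_image_sub_le_of_norm_hasFDerivWithin_le hderiv hbound
    (Metric.mem_closedBall_self (norm_nonneg _)) (y := y) (by simp [r, dist_eq_norm])
  calc |f y - f x - ⟪G x, y - x⟫_ℝ| = ‖f y - ⟪G x, y⟫_ℝ - (f x - ⟪G x, x⟫_ℝ)‖ := by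
        rw [Real.norm_eq_abs, inner_sub_right]
        ring_nf
    _ ≤ L * r * r := hmvt
    _ = L * r ^ 2 := by ring

theorem exists_abs_sub_sub_inner_le_of_convexOn_of_concaveOn [FiniteDimensional ℝ E]
    (hconc : ConcaveOn ℝ univ (fun x => f x - K * ‖x‖ ^ 2))
    (hconv : ConvexOn ℝ univ (fun x => f x + K * ‖x‖ ^ 2)) (x : E) :
    ∃ p : E, ∀ y, |f y - f x - ⟪p, y - x⟫_ℝ| ≤ K * ‖y - x‖ ^ 2 := by
  have hconv' : ConvexOn ℝ univ (fun x => K * ‖x‖ ^ 2 - f x) := by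
    have hneg : (fun x => K * ‖x‖ ^ 2 - f x) = -fun x => f x - K * ‖x‖ ^ 2 := by
      ext x
      simp only [Pi.neg_apply]
      ring
    exact hneg ▸ hconc.neg
  obtain ⟨φ, hφ⟩ := hconv.exists_subgradient
    (continuousOn_univ.1 (hconv.continuousOn isOpen_univ)) x
  obtain ⟨ψ, hψ⟩ := hconv'.exists_subgradient
    (continuousOn_univ.1 (hconv'.continuousOn isOpen_univ)) x
  have hsq (v : E) : ‖x + v‖ ^ 2 = ‖x‖ ^ 2 + 2 * ⟪x, v⟫_ℝ + ‖v‖ ^ 2 := norm_add_sq_real x v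
  have hψ_eq : ψ = (4 * K) • innerSL ℝ x - φ := by
    rw [eq_sub_iff_add_eq, ← sub_eq_zero]
    refine ContinuousLinearMap.eq_zero_of_le_mul_norm_sq (C := 2 * K) fun v => ?_
    have h₁ := hφ (x + v)
    have h₂ := hψ (x + v)
    simp only [add_sub_cancel_left, hsq] at h₁ h₂
    simp only [sub_apply, add_apply, smul_apply, innerSL_apply_apply, smul_eq_mul]
    linarith
  refine ⟨(toDual ℝ E).symm (φ - (2 * K) • innerSL ℝ x), fun y => ?_⟩
  have h₁ := hφ y
  have h₂ := hψ y
  have hy := hsq (y - x)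
  rw [add_sub_cancel] at hy
  rw [hy] at h₁ h₂
  simp only [hψ_eq, toDual_symm_apply, sub_apply, smul_apply, innerSL_apply_apply,
    smul_eq_mul] at h₂ ⊢
  exact abs_le.2 ⟨by linarith, by linarith⟩

theorem exists_hasQuadraticTaylorBound_of_convexOn_of_concaveOn [FiniteDimensional ℝ E]
    (hconc : ConcaveOn ℝ univ (fun x => f x - K * ‖x‖ ^ 2))
    (hconv : ConvexOn ℝ univ (fun x => f x + K * ‖x‖ ^ 2)) :
    ∃ G, HasQuadraticTaylorBound f G K :=
  ⟨_, fun x => (exists_abs_sub_sub_inner_le_of_convexOn_of_concaveOn hconc hconv x).choose_spec⟩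

end InnerProduct

/-- A function `ℝᵈ → ℝ` is `C^{1,1}` — differentiable everywhere with Lipschitz
gradient — if and only if it is both semi-concave and semi-convex: for some `K > 0`,
`x ↦ f(x) − K‖x‖²` is concave and `x ↦ f(x) + K‖x‖²` is convex. -/
theorem C11_iff_semiconcave_and_semiconvex {d : ℕ} (f : EuclideanSpace ℝ (Fin d) → ℝ) :
    (Differentiable ℝ f ∧ ∃ K, LipschitzWith K (fun x => gradient f x)) ↔
    ∃ K > (0:ℝ), ConcaveOn ℝ Set.univ (fun x => f x - K * ‖x‖ ^ 2) ∧
      ConvexOn ℝ Set.univ (fun x => f x + K * ‖x‖ ^ 2) := by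
  constructor
  · rintro ⟨hf, L, hL⟩
    have hbound := (hasQuadraticTaylorBound_of_lipschitzWith (fun x => (hf x).hasGradientAt)
      hL).mono (le_add_of_nonneg_right zero_le_one)
    exact ⟨L + 1, by positivity, hbound.concaveOn_sub, hbound.convexOn_add⟩
  · rintro ⟨K, hK, hconc, hconv⟩
    obtain ⟨G, hG⟩ := exists_hasQuadraticTaylorBound_of_convexOn_of_concaveOn hconc hconv
    have hgrad (x : EuclideanSpace ℝ (Fin d)) : HasGradientAt f (G x) x := hG.hasGradientAt x
    refine ⟨fun x => (hgrad x).differentiableAt, (6 * K).toNNReal, ?_⟩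
    simpa only [fun x => (hgrad x).gradient] using hG.lipschitzWith hK.le
end
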